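/- arXiv:2501.07522 — 2 statements merged into one kernel-verified Lean document; each statement's English description precedes it below -/
import Mathlib

section
/- (a) yG(n) is generated by G_0(n) together with y_0^{−1} (equivalently, by G_0(n) and y_0); (b) the conjugate subgroup y_0 G_0(n) y_0^{−1} is a proper subgroup of G_0(n); and (c) the natural homomorphism from the HNN extension ⟨G_0(n), t | t^{−1} h t = y_0 h y_0^{−1} (h ∈ G_0(n))⟩ to yG(n), restricting to the identity on G_0(n) and sending the stable letter t to y_0^{−1}, is an isomorphism. In other words, yG(n) has a strictly ascending HNN decomposition yG(n) ≅ (G_0(n)) *_{y_0^{−1}}. -/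
namespace LM

/-- Group structure on the self-homeomorphisms of a space, with the convention
`(f * g) ξ = f (g ξ)`.  A product `f₁ f₂ ⋯ f_k` in the paper's convention
(`fg = g ∘ f`) corresponds to `f_k * ⋯ * f₂ * f₁` here. -/
instance homeoGroup {X : Type*} [TopologicalSpace X] : Group (X ≃ₜ X) where
  mul f g := g.trans f
  one := Homeomorph.refl X
  inv := Homeomorph.symm
  mul_assoc _ _ _ := Homeomorph.ext fun _ => rfl
  one_mul _ := Homeomorph.ext fun _ => rfl
  mul_one _ := Homeomorph.ext fun _ => rfl
  inv_mul_cancel f := Homeomorph.ext fun x => f.symm_apply_apply x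

/-- The `n`-adic Cantor set `{0, …, n-1}^ℕ` with the product topology
(`Fin n` being discrete). -/
abbrev C (n : ℕ) : Type := ℕ → Fin n

/-- The group of self-homeomorphisms of the `n`-adic Cantor set. -/
abbrev Γ (n : ℕ) : Type := C n ≃ₜ C n

/-- Prepend a letter to an infinite sequence. -/
def cons {n : ℕ} (a : Fin n) (s : C n) : C n
  | 0 => a
  | i + 1 => s i

/-- Prepend a finite word to an infinite sequence. -/
def wcons {n : ℕ} (w : List (Fin n)) (s : C n) : C n := w.foldr cons s

/-- The sum of the letters of a finite word. -/
def dsum {n : ℕ} (w : List (Fin n)) : ℕ := (w.map Fin.val).sum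

/-- `f` acts as `core` after the prefix `α` and fixes every sequence not beginning
with `α`. -/
def IsPrefixMap {n : ℕ} (α : List (Fin n)) (core : Γ n) (f : Γ n) : Prop :=
  (∀ η, f (wcons α η) = wcons α (core η)) ∧
  (∀ ξ : C n, (∀ η, ξ ≠ wcons α η) → f ξ = ξ)

/-- The defining equations of the generator `x₀` of the Brown–Thompson group `F(n)`. -/
def IsX0 (n : ℕ) (hn : 2 ≤ n) (f : Γ n) : Prop :=
  (∀ k : Fin n, (k : ℕ) ≤ n - 2 → ∀ η,
    f (cons ⟨0, by omega⟩ (cons k η)) = cons k η) ∧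
  (∀ η, f (cons ⟨0, by omega⟩ (cons ⟨n - 1, by omega⟩ η)) =
    cons ⟨n - 1, by omega⟩ (cons ⟨0, by omega⟩ η)) ∧
  (∀ k : Fin n, 1 ≤ (k : ℕ) → (k : ℕ) ≤ n - 2 → ∀ η,
    f (cons k η) = cons ⟨n - 1, by omega⟩ (cons k η)) ∧
  (∀ η, f (cons ⟨n - 1, by omega⟩ η) =
    cons ⟨n - 1, by omega⟩ (cons ⟨n - 1, by omega⟩ η))

/-- The defining equations of the generator `x_j`, `1 ≤ j ≤ n - 2`. -/
def IsXMid (n : ℕ) (hn : 2 ≤ n) (j : Fin n) (f : Γ n) : Prop :=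
  (∀ k : Fin n, (k : ℕ) < (j : ℕ) → ∀ η, f (cons k η) = cons k η) ∧
  (∀ k m : Fin n, (m : ℕ) = (j : ℕ) + (k : ℕ) → (j : ℕ) + (k : ℕ) ≤ n - 2 → ∀ η,
    f (cons j (cons k η)) = cons m η) ∧
  (∀ k m : Fin n, n - 1 ≤ (j : ℕ) + (k : ℕ) → (m : ℕ) = (j : ℕ) + (k : ℕ) - (n - 1) → ∀ η,
    f (cons j (cons k η)) = cons ⟨n - 1, by omega⟩ (cons m η)) ∧
  (∀ k : Fin n, (j : ℕ) < (k : ℕ) → (k : ℕ) ≤ n - 2 → ∀ η,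
    f (cons k η) = cons ⟨n - 1, by omega⟩ (cons k η)) ∧
  (∀ η, f (cons ⟨n - 1, by omega⟩ η) =
    cons ⟨n - 1, by omega⟩ (cons ⟨n - 1, by omega⟩ η))

/-- The defining equations of the generator `x_{n-1}` (in terms of `x₀`). -/
def IsXLast (n : ℕ) (hn : 2 ≤ n) (x0 f : Γ n) : Prop :=
  (∀ k : Fin n, (k : ℕ) ≤ n - 2 → ∀ η, f (cons k η) = cons k η) ∧
  (∀ η, f (cons ⟨n - 1, by omega⟩ η) = cons ⟨n - 1, by omega⟩ (x0 η))

/-- `x` is the family `x₀, …, x_{n-1}` of generators of the Brown–Thompson group. -/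
def IsXFamily (n : ℕ) (hn : 2 ≤ n) (x : Fin n → Γ n) : Prop :=
  IsX0 n hn (x ⟨0, by omega⟩) ∧
  (∀ j : Fin n, 1 ≤ (j : ℕ) → (j : ℕ) ≤ n - 2 → IsXMid n hn j (x j)) ∧
  IsXLast n hn (x ⟨0, by omega⟩) (x ⟨n - 1, by omega⟩)

/-- The defining (co)recursive equations of the map `y`. -/
def IsY (n : ℕ) (hn : 2 ≤ n) (f : Γ n) : Prop :=
  (∀ ζ, f (cons ⟨0, by omega⟩ (cons ⟨0, by omega⟩ ζ)) = cons ⟨0, by omega⟩ (f ζ)) ∧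
  (∀ k : Fin n, 1 ≤ (k : ℕ) → (k : ℕ) ≤ n - 2 → ∀ ζ,
    f (cons ⟨0, by omega⟩ (cons k ζ)) = cons k ζ) ∧
  (∀ k : Fin n, 1 ≤ (k : ℕ) → (k : ℕ) ≤ n - 2 → ∀ ζ,
    f (cons k ζ) = cons ⟨n - 1, by omega⟩ (cons k ζ)) ∧
  (∀ ζ, f (cons ⟨0, by omega⟩ (cons ⟨n - 1, by omega⟩ ζ)) =
    cons ⟨n - 1, by omega⟩ (cons ⟨0, by omega⟩ (f⁻¹ ζ))) ∧
  (∀ ζ, f (cons ⟨n - 1, by omega⟩ ζ) =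
    cons ⟨n - 1, by omega⟩ (cons ⟨n - 1, by omega⟩ (f ζ)))

section Aux

variable {n : ℕ}

theorem gmul_apply (f g : Γ n) (ξ : C n) : (f * g) ξ = f (g ξ) := rfl

theorem gone_apply (ξ : C n) : (1 : Γ n) ξ = ξ := rfl

theorem ginv_apply (f : Γ n) (ξ : C n) : f⁻¹ (f ξ) = ξ := f.symm_apply_apply ξ

theorem gapply_inv (f : Γ n) (ξ : C n) : f (f⁻¹ ξ) = ξ := f.apply_symm_apply ξ

theorem inv_eq_of_apply (f : Γ n) {ξ ψ : C n} (h : f ξ = ψ) : f⁻¹ ψ = ξ := by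
  rw [← h]; exact f.symm_apply_apply ξ

theorem gext {f g : Γ n} (h : ∀ ξ, f ξ = g ξ) : f = g := Homeomorph.ext h

theorem cons_zero (a : Fin n) (s : C n) : cons a s 0 = a := rfl

theorem cons_succ (a : Fin n) (s : C n) (i : ℕ) : cons a s (i + 1) = s i := rfl

theorem cons_eta (ξ : C n) : ξ = cons (ξ 0) (fun i => ξ (i + 1)) := by
  funext i; cases i <;> rfl

theorem exists_cons (ξ : C n) : ∃ a s, ξ = cons a s := ⟨_, _, cons_eta ξ⟩

theorem cons_fst {a b : Fin n} {s t : C n} (h : cons a s = cons b t) : a = b :=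
  congrFun h 0

theorem cons_snd {a b : Fin n} {s t : C n} (h : cons a s = cons b t) : s = t := by
  funext i; exact congrFun h (i + 1)

/-- `m`-fold repetition of a letter in front of a sequence. -/
def reps (a : Fin n) : ℕ → C n → C n
  | 0, s => s
  | m + 1, s => cons a (reps a m s)

theorem reps_zero (a : Fin n) (s : C n) : reps a 0 s = s := rfl

theorem reps_succ (a : Fin n) (m : ℕ) (s : C n) : reps a (m + 1) s = cons a (reps a m s) := rfl

theorem reps_one (a : Fin n) (s : C n) : reps a 1 s = cons a s := rfl

theorem reps_two (a : Fin n) (s : C n) : reps a 2 s = cons a (cons a s) := rfl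

theorem reps_add (a : Fin n) (p q : ℕ) (s : C n) :
    reps a (p + q) s = reps a p (reps a q s) := by
  induction p with
  | zero => rw [Nat.zero_add]; rfl
  | succ p ih => rw [Nat.succ_add, reps_succ, reps_succ, ih]

theorem reps_inj {a : Fin n} {s t : C n} (hs : s 0 ≠ a) (ht : t 0 ≠ a) :
    ∀ {p q : ℕ}, reps a p s = reps a q t → p = q ∧ s = t := by
  intro p
  induction p with
  | zero =>
    intro q h
    cases q with
    | zero => exact ⟨rfl, h⟩
    | succ q => exact absurd (congrFun h 0) hs
  | succ p ih =>
    intro q h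
    cases q with
    | zero => exact absurd (congrFun h 0).symm ht
    | succ q =>
      obtain ⟨h1, h2⟩ := ih (cons_snd h)
      exact ⟨by omega, h2⟩

/-- The constant sequence. -/
def konst (a : Fin n) : C n := fun _ => a

theorem konst_zero (a : Fin n) : konst a 0 = a := rfl

theorem konst_cons (a : Fin n) : cons a (konst a) = konst a := by
  funext i; cases i <;> rfl

theorem wcons_pair (a b : Fin n) (s : C n) : wcons [a, b] s = cons a (cons b s) := rfl

theorem wcons_one (a : Fin n) (s : C n) : wcons [a] s = cons a s := rfl

theorem wcons_triple (a b c : Fin n) (s : C n) :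
    wcons [a, b, c] s = cons a (cons b (cons c s)) := rfl

/-- first letters -/
abbrev fz (n : ℕ) (hn : 2 ≤ n) : Fin n := ⟨0, by omega⟩

abbrev fl (n : ℕ) (hn : 2 ≤ n) : Fin n := ⟨n - 1, by omega⟩

theorem fz_ne_fl (hn : 2 ≤ n) : fz n hn ≠ fl n hn := by
  intro h
  have := congrArg Fin.val h
  simp only [fz, fl] at this
  omega

theorem fl_ne_fz (hn : 2 ≤ n) : fl n hn ≠ fz n hn := (fz_ne_fl hn).symm

theorem fin_tri (hn : 2 ≤ n) (a : Fin n) :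
    a = fz n hn ∨ (1 ≤ (a : ℕ) ∧ (a : ℕ) ≤ n - 2) ∨ a = fl n hn := by
  have h := a.isLt
  by_cases h0 : (a : ℕ) = 0
  · exact Or.inl (Fin.ext h0)
  by_cases hl : (a : ℕ) = n - 1
  · exact Or.inr (Or.inr (Fin.ext hl))
  · exact Or.inr (Or.inl ⟨by omega, by omega⟩)

theorem mid_ne_fz (hn : 2 ≤ n) {a : Fin n} (h : 1 ≤ (a : ℕ)) : a ≠ fz n hn := by
  intro he; rw [he] at h; simp [fz] at h

theorem mid_ne_fl (hn : 2 ≤ n) {a : Fin n} (h : (a : ℕ) ≤ n - 2) : a ≠ fl n hn := by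
  intro he; rw [he] at h; simp only [fl] at h; omega

end Aux

section PM

variable {n : ℕ}

theorem pm_inv {α : List (Fin n)} {core f : Γ n} (h : IsPrefixMap α core f) :
    IsPrefixMap α core⁻¹ f⁻¹ := by
  constructor
  · intro η
    have h1 := h.1 (core⁻¹ η)
    rw [gapply_inv] at h1
    exact inv_eq_of_apply f h1
  · intro ξ hξ
    exact inv_eq_of_apply f (h.2 ξ hξ)

theorem pm_fix1 {a : Fin n} {core f : Γ n} (h : IsPrefixMap [a] core f)
    {ξ : C n} (hξ : ξ 0 ≠ a) : f ξ = ξ :=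
  h.2 ξ (fun η he => hξ (by rw [he, wcons_one, cons_zero]))

theorem pm_fix2 {a b : Fin n} {core f : Γ n} (h : IsPrefixMap [a, b] core f)
    {ξ : C n} (hξ : ξ 0 ≠ a ∨ ξ 1 ≠ b) : f ξ = ξ := by
  refine h.2 ξ (fun η he => ?_)
  rcases hξ with h' | h'
  · exact h' (by rw [he, wcons_pair, cons_zero])
  · exact h' (by rw [he, wcons_pair]; rfl)

theorem pm_fix3 {a b c : Fin n} {core f : Γ n} (h : IsPrefixMap [a, b, c] core f)
    {ξ : C n} (hξ : ξ 0 ≠ a ∨ ξ 1 ≠ b ∨ ξ 2 ≠ c) : f ξ = ξ := by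
  refine h.2 ξ (fun η he => ?_)
  rcases hξ with h' | h' | h'
  · exact h' (by rw [he, wcons_triple, cons_zero])
  · exact h' (by rw [he, wcons_triple]; rfl)
  · exact h' (by rw [he, wcons_triple]; rfl)

theorem pm_cons1 {a : Fin n} {core f : Γ n} (h : IsPrefixMap [a] core f) (η : C n) :
    f (cons a η) = cons a (core η) := h.1 η

theorem pm_cons2 {a b : Fin n} {core f : Γ n} (h : IsPrefixMap [a, b] core f) (η : C n) :
    f (cons a (cons b η)) = cons a (cons b (core η)) := h.1 η

theorem pm_cons3 {a b c : Fin n} {core f : Γ n} (h : IsPrefixMap [a, b, c] core f) (η : C n) :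
    f (cons a (cons b (cons c η))) = cons a (cons b (cons c (core η))) := h.1 η

theorem pm_conj {α β : List (Fin n)} {core f σ : Γ n} (h : IsPrefixMap α core f)
    (hσ : ∀ η, σ (wcons α η) = wcons β η) :
    IsPrefixMap β core (σ * f * σ⁻¹) := by
  have hσ' : ∀ η, σ⁻¹ (wcons β η) = wcons α η := fun η => inv_eq_of_apply σ (hσ η)
  constructor
  · intro η
    show σ (f (σ⁻¹ (wcons β η))) = _
    rw [hσ', h.1, hσ]
  · intro ξ hξ
    show σ (f (σ⁻¹ ξ)) = ξ
    have hfix : f (σ⁻¹ ξ) = σ⁻¹ ξ := by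
      refine h.2 _ (fun η he => hξ η ?_)
      rw [← hσ η, ← he, gapply_inv]
    rw [hfix, gapply_inv]

end PM

section YL

variable {n : ℕ} (hn : 2 ≤ n) {ycore : Γ n} (hy : IsY n hn ycore)

include hy

theorem ycore_top : ycore (konst (fl n hn)) = konst (fl n hn) := by
  have e : ycore (konst (fl n hn)) =
      cons (fl n hn) (cons (fl n hn) (ycore (konst (fl n hn)))) := by
    conv_lhs => rw [← konst_cons (fl n hn)]
    exact hy.2.2.2.2 (konst (fl n hn))
  funext k
  induction k using Nat.strong_induction_on with
  | _ k ih =>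
    match k with
    | 0 => rw [e]; rfl
    | 1 => rw [e]; rfl
    | (k + 2) =>
      rw [e, cons_succ, cons_succ]
      exact ih k (by omega)

theorem ycore_inv_top : ycore⁻¹ (konst (fl n hn)) = konst (fl n hn) :=
  inv_eq_of_apply ycore (ycore_top hn hy)

theorem ycore_reps (m : ℕ) (ξ : C n) :
    ycore (reps (fz n hn) (2 * m) ξ) = reps (fz n hn) m (ycore ξ) := by
  induction m with
  | zero => rw [Nat.mul_zero, reps_zero, reps_zero]
  | succ m ih =>
    have h2 : 2 * (m + 1) = (2 * m + 1) + 1 := by omega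
    rw [h2, reps_succ, reps_succ, hy.1, ih, reps_succ]

theorem ycore_inv_reps (m : ℕ) (ξ : C n) :
    ycore⁻¹ (reps (fz n hn) m ξ) = reps (fz n hn) (2 * m) (ycore⁻¹ ξ) := by
  have h := ycore_reps hn hy m (ycore⁻¹ ξ)
  rw [gapply_inv] at h
  exact inv_eq_of_apply ycore h

theorem ycore_pow_reps (j m : ℕ) :
    (ycore ^ j) (reps (fz n hn) (2 ^ j * m) (konst (fl n hn))) =
      reps (fz n hn) m (konst (fl n hn)) := by
  induction j with
  | zero => rw [pow_zero, Nat.pow_zero, Nat.one_mul, gone_apply]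
  | succ j ih =>
    have h2 : 2 ^ (j + 1) * m = 2 * (2 ^ j * m) := by ring
    rw [pow_succ, gmul_apply, h2, ycore_reps hn hy, ycore_top hn hy, ih]

theorem ycore_invpow_reps (j m : ℕ) :
    ((ycore⁻¹) ^ j) (reps (fz n hn) m (konst (fl n hn))) =
      reps (fz n hn) (2 ^ j * m) (konst (fl n hn)) := by
  induction j generalizing m with
  | zero => rw [pow_zero, Nat.pow_zero, Nat.one_mul, gone_apply]
  | succ j ih =>
    have h2 : 2 ^ (j + 1) * m = 2 ^ j * (2 * m) := by ring
    rw [pow_succ, gmul_apply, ycore_inv_reps hn hy, ycore_inv_top hn hy, ih, h2]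

end YL

section Y0L

variable {n : ℕ} (hn : 2 ≤ n) {ycore y0 : Γ n}
  (hy0 : IsPrefixMap [(⟨0, by omega⟩ : Fin n)] ycore y0)

include hy0

theorem y0_cons (ξ : C n) : y0 (cons (fz n hn) ξ) = cons (fz n hn) (ycore ξ) := hy0.1 ξ

theorem y0_fix {ξ : C n} (h : ξ 0 ≠ fz n hn) : y0 ξ = ξ := pm_fix1 hy0 h

theorem y0_inv_cons (ξ : C n) : y0⁻¹ (cons (fz n hn) ξ) = cons (fz n hn) (ycore⁻¹ ξ) :=
  pm_cons1 (pm_inv hy0) ξ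

theorem y0_inv_fix {ξ : C n} (h : ξ 0 ≠ fz n hn) : y0⁻¹ ξ = ξ := pm_fix1 (pm_inv hy0) h

theorem y0_pow_cons (j : ℕ) (ξ : C n) :
    (y0 ^ j) (cons (fz n hn) ξ) = cons (fz n hn) ((ycore ^ j) ξ) := by
  induction j generalizing ξ with
  | zero => rw [pow_zero, pow_zero, gone_apply, gone_apply]
  | succ j ih =>
    rw [pow_succ, pow_succ, gmul_apply, gmul_apply, y0_cons hn hy0, ih]

theorem y0_invpow_cons (j : ℕ) (ξ : C n) :
    ((y0⁻¹) ^ j) (cons (fz n hn) ξ) = cons (fz n hn) (((ycore⁻¹) ^ j) ξ) := by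
  induction j generalizing ξ with
  | zero => rw [pow_zero, pow_zero, gone_apply, gone_apply]
  | succ j ih =>
    rw [pow_succ, pow_succ, gmul_apply, gmul_apply, y0_inv_cons hn hy0, ih]

end Y0L

section XL

set_option linter.unusedSectionVars false

variable {n : ℕ} (hn : 2 ≤ n) {x0e xl : Γ n}
  (hx0 : IsX0 n hn x0e) (hxl : IsXLast n hn x0e xl)

theorem fzval_le (hn : 2 ≤ n) : ((fz n hn : Fin n) : ℕ) ≤ n - 2 := by
  simp only [fz]; omega

include hx0

theorem x0_e1 (k : Fin n) (hk : (k : ℕ) ≤ n - 2) (η : C n) :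
    x0e (cons (fz n hn) (cons k η)) = cons k η := hx0.1 k hk η

theorem x0_e2 (η : C n) :
    x0e (cons (fz n hn) (cons (fl n hn) η)) = cons (fl n hn) (cons (fz n hn) η) :=
  hx0.2.1 η

theorem x0_e3 (k : Fin n) (h1 : 1 ≤ (k : ℕ)) (h2 : (k : ℕ) ≤ n - 2) (η : C n) :
    x0e (cons k η) = cons (fl n hn) (cons k η) := hx0.2.2.1 k h1 h2 η

theorem x0_e4 (η : C n) :
    x0e (cons (fl n hn) η) = cons (fl n hn) (cons (fl n hn) η) := hx0.2.2.2 η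

theorem x0_i1 (k : Fin n) (hk : (k : ℕ) ≤ n - 2) (η : C n) :
    x0e⁻¹ (cons k η) = cons (fz n hn) (cons k η) :=
  inv_eq_of_apply x0e (x0_e1 hn hx0 k hk η)

theorem x0_i2 (η : C n) :
    x0e⁻¹ (cons (fl n hn) (cons (fz n hn) η)) = cons (fz n hn) (cons (fl n hn) η) :=
  inv_eq_of_apply x0e (x0_e2 hn hx0 η)

theorem x0_i3 (k : Fin n) (h1 : 1 ≤ (k : ℕ)) (h2 : (k : ℕ) ≤ n - 2) (η : C n) :
    x0e⁻¹ (cons (fl n hn) (cons k η)) = cons k η :=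
  inv_eq_of_apply x0e (x0_e3 hn hx0 k h1 h2 η)

theorem x0_i4 (η : C n) :
    x0e⁻¹ (cons (fl n hn) (cons (fl n hn) η)) = cons (fl n hn) η :=
  inv_eq_of_apply x0e (x0_e4 hn hx0 η)

include hxl

theorem xl_l1 (k : Fin n) (hk : (k : ℕ) ≤ n - 2) (η : C n) :
    xl (cons k η) = cons k η := hxl.1 k hk η

theorem xl_l2 (η : C n) : xl (cons (fl n hn) η) = cons (fl n hn) (x0e η) := hxl.2 η

theorem xl_i1 (k : Fin n) (hk : (k : ℕ) ≤ n - 2) (η : C n) :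
    xl⁻¹ (cons k η) = cons k η :=
  inv_eq_of_apply xl (xl_l1 hn hx0 hxl k hk η)

theorem xl_i2 (η : C n) : xl⁻¹ (cons (fl n hn) η) = cons (fl n hn) (x0e⁻¹ η) := by
  refine inv_eq_of_apply xl ?_
  rw [xl_l2 hn hx0 hxl, gapply_inv]

end XL

section Lead

variable {n : ℕ}

/-- The key invariant: `g` acts near `0⁰⁰` as the prefix substitution `0^a ↦ 0^b`. -/
def LeadP (n : ℕ) (hn : 2 ≤ n) (g : Γ n) : Prop :=
  ∃ a b : ℕ, ∀ ζ : C n, g (reps (fz n hn) a ζ) = reps (fz n hn) b ζ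

variable (hn : 2 ≤ n)

theorem leadP_one : LeadP n hn 1 := ⟨0, 0, fun _ => rfl⟩

theorem leadP_mul {g h : Γ n} (hg : LeadP n hn g) (hh : LeadP n hn h) :
    LeadP n hn (g * h) := by
  obtain ⟨a, b, hg⟩ := hg
  obtain ⟨c, d, hh⟩ := hh
  refine ⟨c + (a - d), b + (d + (a - d) - a), fun ζ => ?_⟩
  have h1 : d + (a - d) = a + (d + (a - d) - a) := by omega
  calc (g * h) (reps (fz n hn) (c + (a - d)) ζ)
      = g (h (reps (fz n hn) c (reps (fz n hn) (a - d) ζ))) := by rw [gmul_apply, reps_add]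
    _ = g (reps (fz n hn) (a + (d + (a - d) - a)) ζ) := by
        rw [hh, ← reps_add]
        exact congrArg g (congrFun (congrArg (reps (fz n hn)) h1) ζ)
    _ = reps (fz n hn) b (reps (fz n hn) (d + (a - d) - a) ζ) := by rw [reps_add, hg]
    _ = reps (fz n hn) (b + (d + (a - d) - a)) ζ := by rw [← reps_add]

theorem leadP_inv {g : Γ n} (hg : LeadP n hn g) : LeadP n hn g⁻¹ := by
  obtain ⟨a, b, hg⟩ := hg
  exact ⟨b, a, fun ζ => inv_eq_of_apply g (hg ζ)⟩

theorem leadP_G0 {x : Fin n → Γ n} (hx : IsXFamily n hn x) {ycore y10 : Γ n}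
    (hy10 : IsPrefixMap [(⟨n - 1, by omega⟩ : Fin n), ⟨0, by omega⟩] ycore y10)
    {g : Γ n} (hg : g ∈ Subgroup.closure (Set.range x ∪ {y10})) : LeadP n hn g := by
  refine Subgroup.closure_induction (p := fun w _ => LeadP n hn w) ?_ (leadP_one hn)
    (fun u v _ _ hu hv => leadP_mul hn hu hv) (fun u _ hu => leadP_inv hn hu) hg
  rintro w (⟨j, rfl⟩ | rfl)
  · rcases fin_tri hn j with hj | ⟨hj1, hj2⟩ | hj
    · subst hj
      refine ⟨2, 1, fun ζ => ?_⟩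
      rw [reps_two, reps_one]
      exact hx.1.1 (fz n hn) (fzval_le hn) ζ
    · refine ⟨1, 1, fun ζ => ?_⟩
      rw [reps_one]
      exact (hx.2.1 j hj1 hj2).1 (fz n hn) (by simp only [fz]; omega) ζ
    · subst hj
      refine ⟨1, 1, fun ζ => ?_⟩
      rw [reps_one]
      exact hx.2.2.1 (fz n hn) (fzval_le hn) ζ
  · refine ⟨1, 1, fun ζ => ?_⟩
    rw [reps_one]
    exact pm_fix2 hy10 (Or.inl (by rw [cons_zero]; exact fz_ne_fl hn))

theorem not_leadP_y0_pow {ycore y0 : Γ n} (hy : IsY n hn ycore)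
    (hy0 : IsPrefixMap [(⟨0, by omega⟩ : Fin n)] ycore y0)
    (j : ℕ) (hj : 1 ≤ j) : ¬ LeadP n hn (y0 ^ j) := by
  rintro ⟨A, B, hab⟩
  have key : ∀ m, A ≤ m → m + 1 + A = B + (2 ^ j * m + 1) := by
    intro m hm
    have h1m : m ≤ 2 ^ j * m := Nat.le_mul_of_pos_left m (Nat.pow_pos (by omega : 0 < 2))
    have hs : A + (2 ^ j * m + 1 - A) = 2 ^ j * m + 1 := by omega
    have h := hab (reps (fz n hn) (2 ^ j * m + 1 - A) (konst (fl n hn)))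
    rw [← reps_add, hs, reps_succ, y0_pow_cons hn hy0, ycore_pow_reps hn hy,
      ← reps_succ, ← reps_add] at h
    have := reps_inj (a := fz n hn)
      (by rw [konst_zero]; exact fl_ne_fz hn) (by rw [konst_zero]; exact fl_ne_fz hn) h
    omega
  have e1 := key A (le_refl A)
  have e2 := key (A + 1) (by omega)
  rw [Nat.mul_succ] at e2
  have h2j : 2 ≤ 2 ^ j := by
    calc 2 = 2 ^ 1 := (pow_one 2).symm
    _ ≤ 2 ^ j := Nat.pow_le_pow_right (by omega) hj
  omega

theorem not_leadP_y0_invpow {ycore y0 : Γ n} (hy : IsY n hn ycore)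
    (hy0 : IsPrefixMap [(⟨0, by omega⟩ : Fin n)] ycore y0)
    (j : ℕ) (hj : 1 ≤ j) : ¬ LeadP n hn ((y0⁻¹) ^ j) := by
  rintro ⟨A, B, hab⟩
  have key : ∀ m, A ≤ m → 2 ^ j * m + 1 + A = B + (m + 1) := by
    intro m hm
    have hs : A + (m + 1 - A) = m + 1 := by omega
    have h := hab (reps (fz n hn) (m + 1 - A) (konst (fl n hn)))
    rw [← reps_add, hs, reps_succ, y0_invpow_cons hn hy0, ycore_invpow_reps hn hy,
      ← reps_succ, ← reps_add] at h
    have := reps_inj (a := fz n hn)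
      (by rw [konst_zero]; exact fl_ne_fz hn) (by rw [konst_zero]; exact fl_ne_fz hn) h
    omega
  have e1 := key A (le_refl A)
  have e2 := key (A + 1) (by omega)
  rw [Nat.mul_succ] at e2
  have h2j : 2 ≤ 2 ^ j := by
    calc 2 = 2 ^ 1 := (pow_one 2).symm
    _ ≤ 2 ^ j := Nat.pow_le_pow_right (by omega) hj
  omega

end Lead

section Conj

set_option linter.unusedSectionVars false

variable {n : ℕ} (hn : 2 ≤ n) {x0e xl ycore y10 y0 : Γ n}
  (hx0 : IsX0 n hn x0e) (hxl : IsXLast n hn x0e xl) (hy : IsY n hn ycore)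
  (hy10 : IsPrefixMap [(⟨n - 1, by omega⟩ : Fin n), ⟨0, by omega⟩] ycore y10)
  (hy0 : IsPrefixMap [(⟨0, by omega⟩ : Fin n)] ycore y0)

include hy10 hy0 in
theorem conj_y10 : y0⁻¹ * y10 * y0 = y10 := by
  apply gext; intro ξ
  obtain ⟨a, η, rfl⟩ := exists_cons ξ
  show y0⁻¹ (y10 (y0 (cons a η))) = y10 (cons a η)
  by_cases ha : a = fz n hn
  · subst ha
    rw [y0_cons hn hy0]
    rw [pm_fix2 hy10 (Or.inl (by rw [cons_zero]; exact fz_ne_fl hn)),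
      y0_inv_cons hn hy0, ginv_apply,
      pm_fix2 hy10 (Or.inl (by rw [cons_zero]; exact fz_ne_fl hn))]
  · rw [y0_fix hn hy0 (by rw [cons_zero]; exact ha)]
    by_cases hb : a = fl n hn ∧ η 0 = fz n hn
    · obtain ⟨hb1, hb2⟩ := hb
      subst hb1
      obtain ⟨b, η2, rfl⟩ := exists_cons η
      rw [cons_zero] at hb2
      subst hb2
      rw [pm_cons2 hy10]
      exact y0_inv_fix hn hy0 (by rw [cons_zero]; exact fl_ne_fz hn)
    · have hfix : y10 (cons a η) = cons a η := by
        apply pm_fix2 hy10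
        by_cases h1 : a = fl n hn
        · right; rw [cons_succ]; intro h2; exact hb ⟨h1, h2⟩
        · left; rw [cons_zero]; exact h1
      rw [hfix]
      exact y0_inv_fix hn hy0 (by rw [cons_zero]; exact ha)

include hy0 in
theorem conj_xmid {xj : Γ n} (j : Fin n) (hj1 : 1 ≤ (j : ℕ)) (hj2 : (j : ℕ) ≤ n - 2)
    (hxm : IsXMid n hn j xj) : y0⁻¹ * xj * y0 = xj := by
  apply gext; intro ξ
  obtain ⟨a, η, rfl⟩ := exists_cons ξ
  show y0⁻¹ (xj (y0 (cons a η))) = xj (cons a η)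
  by_cases ha : a = fz n hn
  · subst ha
    have h0j : ((fz n hn : Fin n) : ℕ) < (j : ℕ) := by simp only [fz]; omega
    rw [y0_cons hn hy0, hxm.1 (fz n hn) h0j, y0_inv_cons hn hy0, ginv_apply,
      hxm.1 (fz n hn) h0j]
  · rw [y0_fix hn hy0 (by rw [cons_zero]; exact ha)]
    apply y0_inv_fix hn hy0
    have haval : (a : ℕ) ≠ 0 := fun h => ha (Fin.ext h)
    rcases Nat.lt_trichotomy (a : ℕ) (j : ℕ) with hlt | heq | hgt
    · rw [hxm.1 a hlt, cons_zero]; exact ha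
    · have haj : a = j := Fin.ext heq
      subst haj
      obtain ⟨b, η2, rfl⟩ := exists_cons η
      by_cases hsum : (a : ℕ) + (b : ℕ) ≤ n - 2
      · rw [hxm.2.1 b ⟨(a : ℕ) + (b : ℕ), by omega⟩ rfl hsum, cons_zero]
        intro hc
        have := congrArg Fin.val hc
        simp only [fz] at this
        omega
      · rw [hxm.2.2.1 b ⟨(a : ℕ) + (b : ℕ) - (n - 1),
            by have := a.isLt; have := b.isLt; omega⟩ (by omega) rfl, cons_zero]
        exact fl_ne_fz hn
    · rcases fin_tri hn a with h1 | ⟨h2, h3⟩ | h4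
      · exact absurd (congrArg Fin.val h1) haval
      · rw [hxm.2.2.2.1 a hgt h3, cons_zero]; exact fl_ne_fz hn
      · subst h4; rw [hxm.2.2.2.2 η, cons_zero]; exact fl_ne_fz hn

include hx0 hxl hy0 in
theorem conj_xl : y0⁻¹ * xl * y0 = xl := by
  apply gext; intro ξ
  obtain ⟨a, η, rfl⟩ := exists_cons ξ
  show y0⁻¹ (xl (y0 (cons a η))) = xl (cons a η)
  rcases fin_tri hn a with h1 | ⟨h2, h3⟩ | h4
  · subst h1
    rw [y0_cons hn hy0, xl_l1 hn hx0 hxl (fz n hn) (fzval_le hn),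
      y0_inv_cons hn hy0, ginv_apply, xl_l1 hn hx0 hxl (fz n hn) (fzval_le hn)]
  · rw [y0_fix hn hy0 (by rw [cons_zero]; exact mid_ne_fz hn h2),
      xl_l1 hn hx0 hxl a h3]
    exact y0_inv_fix hn hy0 (by rw [cons_zero]; exact mid_ne_fz hn h2)
  · subst h4
    rw [y0_fix hn hy0 (by rw [cons_zero]; exact fl_ne_fz hn), xl_l2 hn hx0 hxl]
    exact y0_inv_fix hn hy0 (by rw [cons_zero]; exact fl_ne_fz hn)

include hx0 hxl hy hy10 hy0 in
theorem conj_x0 :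
    y0⁻¹ * x0e * y0 =
      ((xl⁻¹ * x0e) * y10 * (xl⁻¹ * x0e)⁻¹) *
        ((xl⁻¹ * y10 * (xl⁻¹)⁻¹)⁻¹ * (xl⁻¹ * (x0e * x0e))) := by
  have hσ1 : ∀ η, (xl⁻¹ : Γ n) (wcons [fl n hn, fz n hn] η) =
      wcons [fl n hn, fz n hn, fz n hn] η := by
    intro η
    rw [wcons_pair, wcons_triple, xl_i2 hn hx0 hxl, x0_i1 hn hx0 (fz n hn) (fzval_le hn)]
  have hσ2 : ∀ η, (xl⁻¹ * x0e) (wcons [fl n hn, fz n hn] η) =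
      wcons [fl n hn, fz n hn, fl n hn] η := by
    intro η
    rw [wcons_pair, wcons_triple, gmul_apply, x0_e4 hn hx0, xl_i2 hn hx0 hxl,
      x0_i2 hn hx0]
  have hpm1 : IsPrefixMap [fl n hn, fz n hn, fz n hn] ycore (xl⁻¹ * y10 * (xl⁻¹)⁻¹) :=
    pm_conj hy10 hσ1
  have hpm1' : IsPrefixMap [fl n hn, fz n hn, fz n hn] ycore⁻¹
      (xl⁻¹ * y10 * (xl⁻¹)⁻¹)⁻¹ := pm_inv hpm1
  have hpm2 : IsPrefixMap [fl n hn, fz n hn, fl n hn] ycore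
      ((xl⁻¹ * x0e) * y10 * (xl⁻¹ * x0e)⁻¹) := pm_conj hy10 hσ2
  apply gext; intro ξ
  obtain ⟨a, η, rfl⟩ := exists_cons ξ
  show y0⁻¹ (x0e (y0 (cons a η))) =
    ((xl⁻¹ * x0e) * y10 * (xl⁻¹ * x0e)⁻¹)
      ((xl⁻¹ * y10 * (xl⁻¹)⁻¹)⁻¹ (xl⁻¹ (x0e (x0e (cons a η)))))
  rcases fin_tri hn a with h1 | ⟨ha1, ha2⟩ | h1
  · subst h1
    obtain ⟨b, η2, rfl⟩ := exists_cons η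
    rcases fin_tri hn b with hb | ⟨hb1, hb2⟩ | hb
    · subst hb
      obtain ⟨c, ζ, rfl⟩ := exists_cons η2
      rcases fin_tri hn c with hc | ⟨hc1, hc2⟩ | hc
      · subst hc
        conv_lhs => rw [y0_cons hn hy0, hy.1, x0_e1 hn hx0 (fz n hn) (fzval_le hn),
          y0_inv_cons hn hy0, ginv_apply]
        conv_rhs => rw [x0_e1 hn hx0 (fz n hn) (fzval_le hn),
          x0_e1 hn hx0 (fz n hn) (fzval_le hn), xl_i1 hn hx0 hxl (fz n hn) (fzval_le hn),
          pm_fix3 hpm1' (Or.inl (by rw [cons_zero]; exact fz_ne_fl hn)),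
          pm_fix3 hpm2 (Or.inl (by rw [cons_zero]; exact fz_ne_fl hn))]
      · conv_lhs => rw [y0_cons hn hy0, hy.2.1 c hc1 hc2, x0_e1 hn hx0 c hc2,
          y0_inv_fix hn hy0 (by rw [cons_zero]; exact mid_ne_fz hn hc1)]
        conv_rhs => rw [x0_e1 hn hx0 (fz n hn) (fzval_le hn), x0_e1 hn hx0 c hc2,
          xl_i1 hn hx0 hxl c hc2,
          pm_fix3 hpm1' (Or.inl (by rw [cons_zero]; exact mid_ne_fl hn hc2)),
          pm_fix3 hpm2 (Or.inl (by rw [cons_zero]; exact mid_ne_fl hn hc2))]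
      · subst hc
        conv_lhs => rw [y0_cons hn hy0, hy.2.2.2.1, x0_e2 hn hx0,
          y0_inv_fix hn hy0 (by rw [cons_zero]; exact fl_ne_fz hn)]
        conv_rhs => rw [x0_e1 hn hx0 (fz n hn) (fzval_le hn), x0_e2 hn hx0,
          xl_i2 hn hx0 hxl, x0_i1 hn hx0 (fz n hn) (fzval_le hn),
          pm_cons3 hpm1',
          pm_fix3 hpm2 (Or.inr (Or.inr (fz_ne_fl hn)))]
    · conv_lhs => rw [y0_cons hn hy0, hy.2.2.1 b hb1 hb2, x0_e2 hn hx0,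
        y0_inv_fix hn hy0 (by rw [cons_zero]; exact fl_ne_fz hn)]
      conv_rhs => rw [x0_e1 hn hx0 b hb2, x0_e3 hn hx0 b hb1 hb2,
        xl_i2 hn hx0 hxl, x0_i1 hn hx0 b hb2,
        pm_fix3 hpm1' (Or.inr (Or.inr (mid_ne_fz hn hb1))),
        pm_fix3 hpm2 (Or.inr (Or.inr (mid_ne_fl hn hb2)))]
    · subst hb
      conv_lhs => rw [y0_cons hn hy0, hy.2.2.2.2, x0_e2 hn hx0,
        y0_inv_fix hn hy0 (by rw [cons_zero]; exact fl_ne_fz hn)]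
      conv_rhs => rw [x0_e2 hn hx0, x0_e4 hn hx0, xl_i2 hn hx0 hxl, x0_i2 hn hx0,
        pm_fix3 hpm1' (Or.inr (Or.inr (fl_ne_fz hn))),
        pm_cons3 hpm2]
  · conv_lhs => rw [y0_fix hn hy0 (by rw [cons_zero]; exact mid_ne_fz hn ha1),
      x0_e3 hn hx0 a ha1 ha2,
      y0_inv_fix hn hy0 (by rw [cons_zero]; exact fl_ne_fz hn)]
    conv_rhs => rw [x0_e3 hn hx0 a ha1 ha2, x0_e4 hn hx0, xl_i2 hn hx0 hxl,
      x0_i3 hn hx0 a ha1 ha2,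
      pm_fix3 hpm1' (Or.inr (Or.inl (mid_ne_fz hn ha1))),
      pm_fix3 hpm2 (Or.inr (Or.inl (mid_ne_fz hn ha1)))]
  · subst h1
    conv_lhs => rw [y0_fix hn hy0 (by rw [cons_zero]; exact fl_ne_fz hn), x0_e4 hn hx0,
      y0_inv_fix hn hy0 (by rw [cons_zero]; exact fl_ne_fz hn)]
    conv_rhs => rw [x0_e4 hn hx0, x0_e4 hn hx0, xl_i2 hn hx0 hxl, x0_i4 hn hx0,
      pm_fix3 hpm1' (Or.inr (Or.inl (fl_ne_fz hn))),
      pm_fix3 hpm2 (Or.inr (Or.inl (fl_ne_fz hn)))]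

include hx0 hy hy0 in
theorem not_leadP_conj : ¬ LeadP n hn (y0 * x0e * y0⁻¹) := by
  rintro ⟨A, B, hab⟩
  cases A with
  | zero =>
    have h1 := hab (konst (fl n hn))
    rw [reps_zero] at h1
    have hk : (y0 * x0e * y0⁻¹) (konst (fl n hn)) = konst (fl n hn) := by
      show y0 (x0e (y0⁻¹ (konst (fl n hn)))) = _
      rw [y0_inv_fix hn hy0 (by rw [konst_zero]; exact fl_ne_fz hn)]
      conv_lhs => rw [← konst_cons (fl n hn), x0_e4 hn hx0, konst_cons, konst_cons]
      exact y0_fix hn hy0 (by rw [konst_zero]; exact fl_ne_fz hn)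
    rw [hk] at h1
    have hB : B = 0 := by
      cases B with
      | zero => rfl
      | succ B' => exact absurd (congrFun h1 0) (fl_ne_fz hn)
    subst hB
    have h2 := hab (cons (fz n hn) (konst (fl n hn)))
    rw [reps_zero] at h2
    have hc : (y0 * x0e * y0⁻¹) (cons (fz n hn) (konst (fl n hn))) =
        cons (fl n hn) (cons (fz n hn) (konst (fl n hn))) := by
      show y0 (x0e (y0⁻¹ _)) = _
      rw [y0_inv_cons hn hy0, ycore_inv_top hn hy]
      conv_lhs => rw [← konst_cons (fl n hn)]
      rw [x0_e2 hn hx0]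
      exact y0_fix hn hy0 (by rw [cons_zero]; exact fl_ne_fz hn)
    rw [hc] at h2
    exact (fl_ne_fz hn) (congrFun h2 0)
  | succ A' =>
    have h1 := hab (reps (fz n hn) 1 (konst (fl n hn)))
    rw [← reps_add, ← reps_add] at h1
    have hcomp : (y0 * x0e * y0⁻¹) (reps (fz n hn) (A' + 1 + 1) (konst (fl n hn))) =
        reps (fz n hn) (A' + 1) (cons (fl n hn) (cons (fz n hn) (konst (fl n hn)))) := by
      show y0 (x0e (y0⁻¹ _)) = _
      rw [reps_succ, y0_inv_cons hn hy0, ycore_inv_reps hn hy, ycore_inv_top hn hy]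
      have e1 : 2 * (A' + 1) = (2 * A' + 1) + 1 := by omega
      rw [e1, reps_succ, x0_e1 hn hx0 (fz n hn) (fzval_le hn), y0_cons hn hy0]
      have e3 : reps (fz n hn) (2 * A' + 1) (konst (fl n hn)) =
          reps (fz n hn) (2 * A') (cons (fz n hn) (konst (fl n hn))) := by
        rw [reps_add, reps_one]
      rw [e3, ycore_reps hn hy]
      have e4 : ycore (cons (fz n hn) (konst (fl n hn))) =
          cons (fl n hn) (cons (fz n hn) (konst (fl n hn))) := by
        conv_lhs => rw [← konst_cons (fl n hn)]
        rw [hy.2.2.2.1, ycore_inv_top hn hy]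
      rw [e4, ← reps_succ]
    rw [hcomp] at h1
    have hinj := reps_inj (a := fz n hn)
      (by rw [cons_zero]; exact fl_ne_fz hn)
      (by rw [konst_zero]; exact fl_ne_fz hn) h1
    exact (fz_ne_fl hn) (congrFun hinj.2 1)

end Conj

theorem closure_union_inv {G : Type*} [Group G] (S : Set G) (g : G) :
    Subgroup.closure (S ∪ {g⁻¹}) = Subgroup.closure (S ∪ {g}) := by
  apply le_antisymm
  · rw [Subgroup.closure_le]
    rintro w (hw | rfl)
    · exact Subgroup.subset_closure (Or.inl hw)
    · exact inv_mem (Subgroup.subset_closure (Or.inr rfl))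
  · rw [Subgroup.closure_le]
    rintro w (hw | hw)
    · exact Subgroup.subset_closure (Or.inl hw)
    · have hwg : w = g := hw
      rw [hwg]
      have h1 : g⁻¹ ∈ Subgroup.closure (S ∪ {g⁻¹}) := Subgroup.subset_closure (Or.inr rfl)
      have h2 := inv_mem h1
      rw [inv_inv] at h2
      exact h2

theorem conj_mem {n : ℕ} (hn : 2 ≤ n) {x : Fin n → Γ n} (hx : IsXFamily n hn x)
    {ycore y10 y0 : Γ n} (hy : IsY n hn ycore)
    (hy10 : IsPrefixMap [(⟨n - 1, by omega⟩ : Fin n), ⟨0, by omega⟩] ycore y10)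
    (hy0 : IsPrefixMap [(⟨0, by omega⟩ : Fin n)] ycore y0) :
    ∀ g ∈ Subgroup.closure (Set.range x ∪ {y10}),
      y0⁻¹ * g * y0 ∈ Subgroup.closure (Set.range x ∪ {y10}) := by
  intro g hg
  refine Subgroup.closure_induction
    (p := fun w _ => y0⁻¹ * w * y0 ∈ Subgroup.closure (Set.range x ∪ {y10}))
    ?_ ?_ ?_ ?_ hg
  · rintro w hw
    show y0⁻¹ * w * y0 ∈ Subgroup.closure (Set.range x ∪ {y10})
    have hx0m : x (⟨0, by omega⟩ : Fin n) ∈ Subgroup.closure (Set.range x ∪ {y10}) :=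
      Subgroup.subset_closure (Or.inl ⟨_, rfl⟩)
    have hxlm : x (⟨n - 1, by omega⟩ : Fin n) ∈ Subgroup.closure (Set.range x ∪ {y10}) :=
      Subgroup.subset_closure (Or.inl ⟨_, rfl⟩)
    have hym : y10 ∈ Subgroup.closure (Set.range x ∪ {y10}) :=
      Subgroup.subset_closure (Or.inr rfl)
    rcases hw with ⟨j, rfl⟩ | rfl
    · rcases fin_tri hn j with hj | ⟨hj1, hj2⟩ | hj
      · subst hj
        rw [conj_x0 hn hx.1 hx.2.2 hy hy10 hy0]
        exact mul_mem
          (mul_mem (mul_mem (mul_mem (inv_mem hxlm) hx0m) hym)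
            (inv_mem (mul_mem (inv_mem hxlm) hx0m)))
          (mul_mem
            (inv_mem (mul_mem (mul_mem (inv_mem hxlm) hym) (inv_mem (inv_mem hxlm))))
            (mul_mem (inv_mem hxlm) (mul_mem hx0m hx0m)))
      · rw [conj_xmid hn hy0 j hj1 hj2 (hx.2.1 j hj1 hj2)]
        exact Subgroup.subset_closure (Or.inl ⟨j, rfl⟩)
      · subst hj
        rw [conj_xl hn hx.1 hx.2.2 hy0]
        exact hxlm
    · rw [conj_y10 hn hy10 hy0]
      exact hym
  · show y0⁻¹ * 1 * y0 ∈ Subgroup.closure (Set.range x ∪ {y10})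
    rw [mul_one, inv_mul_cancel]
    exact one_mem _
  · intro u v _ _ hpu hpv
    show y0⁻¹ * (u * v) * y0 ∈ Subgroup.closure (Set.range x ∪ {y10})
    have h : y0⁻¹ * (u * v) * y0 = (y0⁻¹ * u * y0) * (y0⁻¹ * v * y0) := by group
    rw [h]; exact mul_mem hpu hpv
  · intro u _ hpu
    show y0⁻¹ * u⁻¹ * y0 ∈ Subgroup.closure (Set.range x ∪ {y10})
    have h : y0⁻¹ * u⁻¹ * y0 = (y0⁻¹ * u * y0)⁻¹ := by group
    rw [h]; exact inv_mem hpu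


theorem yG_HNN_over_G0
    (n : ℕ) (hn : 2 ≤ n) (x : Fin n → Γ n) (hx : IsXFamily n hn x)
    (ycore : Γ n) (hy : IsY n hn ycore)
    (y10 : Γ n) (hy10 : IsPrefixMap [⟨n - 1, by omega⟩, ⟨0, by omega⟩] ycore y10)
    (y0 : Γ n) (hy0 : IsPrefixMap [⟨0, by omega⟩] ycore y0)
    (G0 : Subgroup (Γ n)) (hG0 : G0 = Subgroup.closure (Set.range x ∪ {y10}))
    (yG : Subgroup (Γ n)) (hyG : yG = Subgroup.closure (Set.range x ∪ {y10, y0})) :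
    Subgroup.closure ((G0 : Set (Γ n)) ∪ {y0⁻¹}) = yG ∧
    G0.map (MulAut.conj (y0⁻¹)).toMonoidHom < G0 ∧
    ∃ (B : Subgroup ↥G0) (φ : (⊤ : Subgroup ↥G0) ≃* B),
      (∀ a : (⊤ : Subgroup ↥G0),
        ((φ a : ↥G0) : Γ n) = y0⁻¹ * ((a : ↥G0) : Γ n) * (y0⁻¹)⁻¹) ∧
      ∃ f : HNNExtension ↥G0 ⊤ B φ →* Γ n,
        (∀ h : ↥G0, f (HNNExtension.of h) = (h : Γ n)) ∧
        f HNNExtension.t = y0⁻¹ ∧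
        Function.Injective f ∧ f.range = yG := by
  -- conjugation maps `G0` into itself
  have conjmem : ∀ g ∈ G0, y0⁻¹ * g * y0 ∈ G0 := by
    rw [hG0]; exact conj_mem hn hx hy hy10 hy0
  have leadG0 : ∀ g ∈ G0, LeadP n hn g := by
    rw [hG0]; exact fun g hg => leadP_G0 hn hx hy10 hg
  -- Part (a)
  have parta : Subgroup.closure ((G0 : Set (Γ n)) ∪ {y0⁻¹}) = yG := by
    rw [closure_union_inv, Subgroup.closure_union, Subgroup.closure_eq, hyG, hG0,
      ← Subgroup.closure_union, Set.union_assoc, Set.singleton_union]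
  refine ⟨parta, ?_, ?_⟩
  -- Part (b)
  · rw [SetLike.lt_iff_le_and_exists]
    constructor
    · rintro w hw
      rw [Subgroup.mem_map] at hw
      obtain ⟨g, hg, rfl⟩ := hw
      have h1 : (MulAut.conj (y0⁻¹)).toMonoidHom g = y0⁻¹ * g * y0 := by
        simp [MulAut.conj_apply]
      rw [h1]
      exact conjmem g hg
    · refine ⟨x ⟨0, by omega⟩, by rw [hG0]; exact Subgroup.subset_closure (Or.inl ⟨_, rfl⟩), ?_⟩
      rw [Subgroup.mem_map]
      rintro ⟨g, hg, heq⟩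
      have heq' : y0⁻¹ * g * y0 = x ⟨0, by omega⟩ := by
        rw [← heq]; simp [MulAut.conj_apply]
      have hgval : g = y0 * x ⟨0, by omega⟩ * y0⁻¹ := by
        rw [← heq']; group
      have hl := leadG0 g hg
      rw [hgval] at hl
      exact not_leadP_conj hn hx.1 hy hy0 hl
  -- Part (c)
  · have hΨmul : ∀ a b : ↥G0,
        (⟨y0⁻¹ * ((a * b : ↥G0) : Γ n) * y0, conjmem _ (a * b).2⟩ : ↥G0) =
        (⟨y0⁻¹ * (a : Γ n) * y0, conjmem _ a.2⟩ : ↥G0) *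
          ⟨y0⁻¹ * (b : Γ n) * y0, conjmem _ b.2⟩ := by
      intro a b
      apply Subtype.ext
      show y0⁻¹ * ((a : Γ n) * (b : Γ n)) * y0 = (y0⁻¹ * a * y0) * (y0⁻¹ * b * y0)
      group
    set Ψ : ↥G0 →* ↥G0 :=
      MonoidHom.mk' (fun g => ⟨y0⁻¹ * (g : Γ n) * y0, conjmem _ g.2⟩) hΨmul with hΨdef
    have hΨapp : ∀ g : ↥G0, (Ψ g : Γ n) = y0⁻¹ * (g : Γ n) * y0 := fun g => rfl
    have hΨinj : Function.Injective Ψ := by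
      intro a b hab
      have h1 : y0⁻¹ * (a : Γ n) * y0 = y0⁻¹ * (b : Γ n) * y0 := by
        rw [← hΨapp, ← hΨapp, hab]
      exact Subtype.ext (mul_left_cancel (mul_right_cancel h1))
    set φ : (⊤ : Subgroup ↥G0) ≃* Ψ.range :=
      Subgroup.topEquiv.trans (MonoidHom.ofInjective hΨinj) with hφdef
    have hφapp : ∀ a : (⊤ : Subgroup ↥G0), ((φ a : ↥G0) : Γ n) =
        y0⁻¹ * ((a : ↥G0) : Γ n) * y0 := fun a => rfl
    refine ⟨Ψ.range, φ, fun a => by rw [inv_inv]; exact hφapp a, ?_⟩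
    have hcomm : ∀ a : (⊤ : Subgroup ↥G0),
        y0⁻¹ * G0.subtype ↑a = G0.subtype ↑(φ a) * y0⁻¹ := by
      intro a
      show y0⁻¹ * ((a : ↥G0) : Γ n) = ((φ a : ↥G0) : Γ n) * y0⁻¹
      rw [hφapp]
      group
    set f : HNNExtension ↥G0 ⊤ Ψ.range φ →* Γ n :=
      HNNExtension.lift G0.subtype y0⁻¹ hcomm with hfdef
    have hfof : ∀ h : ↥G0, f (HNNExtension.of h) = (h : Γ n) :=
      fun h => HNNExtension.lift_of _ _ _ h
    have hft : f HNNExtension.t = y0⁻¹ := HNNExtension.lift_t _ _ _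
    -- the t-relations
    have trel : ∀ g : ↥G0,
        (HNNExtension.t : HNNExtension ↥G0 ⊤ Ψ.range φ) * HNNExtension.of g =
          HNNExtension.of (Ψ g) * HNNExtension.t := by
      intro g
      exact HNNExtension.t_mul_of (φ := φ) ⟨g, trivial⟩
    have trel' : ∀ g : ↥G0,
        HNNExtension.of g * (HNNExtension.t : HNNExtension ↥G0 ⊤ Ψ.range φ)⁻¹ =
          (HNNExtension.t)⁻¹ * HNNExtension.of (Ψ g) := by
      intro g
      calc HNNExtension.of g * (HNNExtension.t)⁻¹
          = (HNNExtension.t)⁻¹ * (HNNExtension.t * HNNExtension.of g) *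
              (HNNExtension.t)⁻¹ := by group
        _ = (HNNExtension.t)⁻¹ * (HNNExtension.of (Ψ g) * HNNExtension.t) *
              (HNNExtension.t)⁻¹ := by rw [trel]
        _ = (HNNExtension.t)⁻¹ * HNNExtension.of (Ψ g) := by group
    have tpow_of : ∀ (k : ℕ) (g : ↥G0),
        (HNNExtension.t : HNNExtension ↥G0 ⊤ Ψ.range φ) ^ k * HNNExtension.of g =
          HNNExtension.of (Ψ^[k] g) * (HNNExtension.t) ^ k := by
      intro k
      induction k with
      | zero => intro g; simp
      | succ k ih =>
        intro g
        calc (HNNExtension.t) ^ (k + 1) * HNNExtension.of g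
            = (HNNExtension.t) ^ k * ((HNNExtension.t) * HNNExtension.of g) := by
              rw [pow_succ, mul_assoc]
          _ = (HNNExtension.t) ^ k * (HNNExtension.of (Ψ g) * HNNExtension.t) := by
              rw [trel]
          _ = ((HNNExtension.t) ^ k * HNNExtension.of (Ψ g)) * HNNExtension.t := by
              rw [mul_assoc]
          _ = (HNNExtension.of (Ψ^[k] (Ψ g)) * (HNNExtension.t) ^ k) * HNNExtension.t := by
              rw [ih]
          _ = HNNExtension.of (Ψ^[k + 1] g) * (HNNExtension.t) ^ (k + 1) := by
              rw [← Function.iterate_succ_apply, mul_assoc, ← pow_succ]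
    have of_tinvpow : ∀ (m : ℕ) (g : ↥G0),
        HNNExtension.of g * ((HNNExtension.t : HNNExtension ↥G0 ⊤ Ψ.range φ) ^ m)⁻¹ =
          ((HNNExtension.t) ^ m)⁻¹ * HNNExtension.of (Ψ^[m] g) := by
      intro m
      induction m with
      | zero => intro g; simp
      | succ m ih =>
        intro g
        calc HNNExtension.of g * ((HNNExtension.t) ^ (m + 1))⁻¹
            = (HNNExtension.of g * (HNNExtension.t)⁻¹) * ((HNNExtension.t) ^ m)⁻¹ := by
              rw [pow_succ, mul_inv_rev, mul_assoc]
          _ = ((HNNExtension.t)⁻¹ * HNNExtension.of (Ψ g)) * ((HNNExtension.t) ^ m)⁻¹ := by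
              rw [trel']
          _ = (HNNExtension.t)⁻¹ * (HNNExtension.of (Ψ g) * ((HNNExtension.t) ^ m)⁻¹) := by
              rw [mul_assoc]
          _ = (HNNExtension.t)⁻¹ * (((HNNExtension.t) ^ m)⁻¹ * HNNExtension.of (Ψ^[m] (Ψ g))) := by
              rw [ih]
          _ = ((HNNExtension.t) ^ (m + 1))⁻¹ * HNNExtension.of (Ψ^[m + 1] g) := by
              rw [← Function.iterate_succ_apply, pow_succ, mul_inv_rev, mul_assoc]
    have normal_form : ∀ w : HNNExtension ↥G0 ⊤ Ψ.range φ, ∃ (m k : ℕ) (g : ↥G0),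
        w = ((HNNExtension.t) ^ m)⁻¹ * HNNExtension.of g * (HNNExtension.t) ^ k := by
      intro w
      induction w using HNNExtension.induction_on with
      | of g => exact ⟨0, 0, g, by simp⟩
      | t => exact ⟨0, 1, 1, by simp⟩
      | mul u v hu hv =>
        obtain ⟨m1, k1, g1, rfl⟩ := hu
        obtain ⟨m2, k2, g2, rfl⟩ := hv
        rcases Nat.le_total m2 k1 with h | h
        · refine ⟨m1, k1 - m2 + k2, g1 * Ψ^[k1 - m2] g2, ?_⟩
          have e1 : (HNNExtension.t : HNNExtension ↥G0 ⊤ Ψ.range φ) ^ k1 *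
              ((HNNExtension.t) ^ m2)⁻¹ = (HNNExtension.t) ^ (k1 - m2) := by
            calc (HNNExtension.t) ^ k1 * ((HNNExtension.t) ^ m2)⁻¹
                = (HNNExtension.t) ^ (k1 - m2) * (HNNExtension.t) ^ m2 *
                    ((HNNExtension.t) ^ m2)⁻¹ := by
                  rw [← pow_add]
                  congr 2
                  omega
              _ = (HNNExtension.t) ^ (k1 - m2) := by group
          calc ((HNNExtension.t) ^ m1)⁻¹ * HNNExtension.of g1 * (HNNExtension.t) ^ k1 *
                (((HNNExtension.t) ^ m2)⁻¹ * HNNExtension.of g2 * (HNNExtension.t) ^ k2)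
              = ((HNNExtension.t) ^ m1)⁻¹ * HNNExtension.of g1 *
                  ((HNNExtension.t) ^ k1 * ((HNNExtension.t) ^ m2)⁻¹) *
                  HNNExtension.of g2 * (HNNExtension.t) ^ k2 := by group
            _ = ((HNNExtension.t) ^ m1)⁻¹ * HNNExtension.of g1 *
                  ((HNNExtension.t) ^ (k1 - m2) * HNNExtension.of g2) *
                  (HNNExtension.t) ^ k2 := by rw [e1]; group
            _ = ((HNNExtension.t) ^ m1)⁻¹ * HNNExtension.of g1 *
                  (HNNExtension.of (Ψ^[k1 - m2] g2) * (HNNExtension.t) ^ (k1 - m2)) *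
                  (HNNExtension.t) ^ k2 := by rw [tpow_of]
            _ = ((HNNExtension.t) ^ m1)⁻¹ *
                  (HNNExtension.of g1 * HNNExtension.of (Ψ^[k1 - m2] g2)) *
                  ((HNNExtension.t) ^ (k1 - m2) * (HNNExtension.t) ^ k2) := by group
            _ = ((HNNExtension.t) ^ m1)⁻¹ * HNNExtension.of (g1 * Ψ^[k1 - m2] g2) *
                  (HNNExtension.t) ^ (k1 - m2 + k2) := by rw [← map_mul, ← pow_add]
        · refine ⟨m2 - k1 + m1, k2, Ψ^[m2 - k1] g1 * g2, ?_⟩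
          have e1 : (HNNExtension.t : HNNExtension ↥G0 ⊤ Ψ.range φ) ^ k1 *
              ((HNNExtension.t) ^ m2)⁻¹ = (((HNNExtension.t) ^ (m2 - k1))⁻¹) := by
            have hk : m2 = k1 + (m2 - k1) := by omega
            calc (HNNExtension.t) ^ k1 * ((HNNExtension.t) ^ m2)⁻¹
                = (HNNExtension.t) ^ k1 * ((HNNExtension.t) ^ (k1 + (m2 - k1)))⁻¹ := by
                  rw [← hk]
              _ = (((HNNExtension.t) ^ (m2 - k1))⁻¹) := by rw [pow_add]; group
          calc ((HNNExtension.t) ^ m1)⁻¹ * HNNExtension.of g1 * (HNNExtension.t) ^ k1 *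
                (((HNNExtension.t) ^ m2)⁻¹ * HNNExtension.of g2 * (HNNExtension.t) ^ k2)
              = ((HNNExtension.t) ^ m1)⁻¹ * HNNExtension.of g1 *
                  ((HNNExtension.t) ^ k1 * ((HNNExtension.t) ^ m2)⁻¹) *
                  HNNExtension.of g2 * (HNNExtension.t) ^ k2 := by group
            _ = ((HNNExtension.t) ^ m1)⁻¹ *
                  (HNNExtension.of g1 * ((HNNExtension.t) ^ (m2 - k1))⁻¹) *
                  HNNExtension.of g2 * (HNNExtension.t) ^ k2 := by rw [e1]; group
            _ = ((HNNExtension.t) ^ m1)⁻¹ *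
                  (((HNNExtension.t) ^ (m2 - k1))⁻¹ * HNNExtension.of (Ψ^[m2 - k1] g1)) *
                  HNNExtension.of g2 * (HNNExtension.t) ^ k2 := by rw [of_tinvpow]
            _ = (((HNNExtension.t) ^ (m2 - k1)) * ((HNNExtension.t) ^ m1))⁻¹ *
                  (HNNExtension.of (Ψ^[m2 - k1] g1) * HNNExtension.of g2) *
                  (HNNExtension.t) ^ k2 := by rw [mul_inv_rev]; group
            _ = ((HNNExtension.t) ^ (m2 - k1 + m1))⁻¹ *
                  HNNExtension.of (Ψ^[m2 - k1] g1 * g2) * (HNNExtension.t) ^ k2 := by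
                rw [← map_mul, ← pow_add]
      | inv u hu =>
        obtain ⟨m, k, g, rfl⟩ := hu
        refine ⟨k, m, g⁻¹, ?_⟩
        rw [map_inv]; group
    have hinj : Function.Injective f := by
      rw [injective_iff_map_eq_one]
      intro w hw
      obtain ⟨m, k, g, rfl⟩ := normal_form w
      rw [map_mul, map_mul, map_inv, map_pow, map_pow, hft, hfof] at hw
      have hg : (g : Γ n) = (y0⁻¹) ^ m * ((y0⁻¹) ^ k)⁻¹ := by
        calc (g : Γ n)
            = ((y0⁻¹) ^ m) * ((((y0⁻¹) ^ m)⁻¹ * (g : Γ n) * (y0⁻¹) ^ k) *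
                ((y0⁻¹) ^ k)⁻¹) := by group
          _ = ((y0⁻¹) ^ m) * (1 * ((y0⁻¹) ^ k)⁻¹) := by rw [← mul_assoc, hw]; group
          _ = (y0⁻¹) ^ m * ((y0⁻¹) ^ k)⁻¹ := by group
      rcases Nat.lt_trichotomy m k with hmk | hmk | hmk
      · exfalso
        have hk : k = (k - m) + m := by omega
        have hgy : (g : Γ n) = y0 ^ (k - m) := by
          rw [hg]
          calc (y0⁻¹) ^ m * ((y0⁻¹) ^ k)⁻¹
              = (y0⁻¹) ^ m * ((y0⁻¹) ^ ((k - m) + m))⁻¹ := by rw [← hk]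
            _ = ((y0⁻¹) ^ (k - m))⁻¹ := by rw [pow_add]; group
            _ = y0 ^ (k - m) := by rw [← inv_pow, inv_inv]
        have hl := leadG0 g g.2
        rw [hgy] at hl
        exact not_leadP_y0_pow hn hy hy0 (k - m) (by omega) hl
      · subst hmk
        have hg1 : g = 1 := by
          apply Subtype.ext
          rw [hg]
          simp only [OneMemClass.coe_one]
          group
        rw [hg1, map_one]
        group
      · exfalso
        have hk : m = (m - k) + k := by omega
        have hgy : (g : Γ n) = (y0⁻¹) ^ (m - k) := by
          rw [hg]
          calc (y0⁻¹) ^ m * ((y0⁻¹) ^ k)⁻¹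
              = (y0⁻¹) ^ ((m - k) + k) * ((y0⁻¹) ^ k)⁻¹ := by rw [← hk]
            _ = (y0⁻¹) ^ (m - k) := by rw [pow_add]; group
        have hl := leadG0 g g.2
        rw [hgy] at hl
        exact not_leadP_y0_invpow hn hy hy0 (m - k) (by omega) hl
    refine ⟨f, hfof, hft, hinj, ?_⟩
    apply le_antisymm
    · rintro w ⟨v, rfl⟩
      induction v using HNNExtension.induction_on with
      | of g =>
        rw [hfof]
        rw [← parta]
        exact Subgroup.subset_closure (Or.inl g.2)
      | t =>
        rw [hft, ← parta]
        exact Subgroup.subset_closure (Or.inr rfl)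
      | mul u v hu hv => rw [map_mul]; exact mul_mem hu hv
      | inv u hu => rw [map_inv]; exact inv_mem hu
    · rw [← parta, Subgroup.closure_le]
      rintro w (hw | rfl)
      · exact ⟨HNNExtension.of ⟨w, hw⟩, hfof _⟩
      · exact ⟨HNNExtension.t, hft⟩

end LM
end

section
/- (a) yGy(n) is generated by Gy(n) together with y_0^{−1} (equivalently, by Gy(n) and y_0); (b) the conjugate subgroup y_0 Gy(n) y_0^{−1} is a proper subgroup of Gy(n); and (c) the natural homomorphism from the HNN extension ⟨Gy(n), t | t^{−1} h t = y_0 h y_0^{−1} (h ∈ Gy(n))⟩ to yGy(n), restricting to the identity on Gy(n) and sending the stable letter t to y_0^{−1}, is an isomorphism. In other words, yGy(n) has a strictly ascending HNN decomposition yGy(n) ≅ (Gy(n)) *_{y_0^{−1}}. -/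
namespace LM

/-!
Conjugation `g ↦ y₀⁻¹ g y₀` maps `Gy(n)` into itself: every generator other than `x₀` fixes the
cone `0 C_n` pointwise and so commutes with `y₀`, while
`y₀⁻¹ x₀ y₀ = y_{(n-1)0(n-1)} y_{(n-1)00}⁻¹ x₀ x_{0@0}` (composed right to left) is a word in
`Gy(n)`. Hence the ascending HNN extension of `Gy(n)` with stable letter `y₀⁻¹` maps onto
`yGy(n)`. Each of its elements has the form `t⁻ᵖ g tᵠ`, so injectivity amounts to `y₀ᵈ ∉ Gy(n)`
for `d ≠ 0`. This, and properness, are read off the germ at `0^∞`: near `0^∞` every element of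
`Gy(n)` is a prefix replacement `0ᵏ ↦ 0ˡ`, whereas `y` sends `0^{2j}(n-1)^∞` to `0^j(n-1)^∞`, so
neither `y₀ᵈ` (`d ≠ 0`) nor `y₀ x₀ y₀⁻¹` is.
-/

section Homeomorph
variable {X : Type*} [TopologicalSpace X]

@[simp] theorem mul_apply (f g : X ≃ₜ X) (ξ : X) : (f * g) ξ = f (g ξ) := rfl

@[simp] theorem inv_apply_apply (f : X ≃ₜ X) (ξ : X) : f⁻¹ (f ξ) = ξ := f.symm_apply_apply ξ

@[simp] theorem apply_inv_apply (f : X ≃ₜ X) (ξ : X) : f (f⁻¹ ξ) = ξ := f.apply_symm_apply ξ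

theorem inv_apply_eq_of_apply_eq {f : X ≃ₜ X} {ξ σ : X} (h : f σ = ξ) : f⁻¹ ξ = σ := by
  rw [← h, inv_apply_apply]

end Homeomorph

section SubgroupConj
variable {G : Type*} [Group G]

theorem map_conj_closure_le {X : Set G} {s : G} (h : ∀ g ∈ X, s * g * s⁻¹ ∈ Subgroup.closure X) :
    (Subgroup.closure X).map (MulAut.conj s).toMonoidHom ≤ Subgroup.closure X := by
  rw [MonoidHom.map_closure, Subgroup.closure_le]
  rintro _ ⟨g, hg, rfl⟩
  exact h g hg

theorem map_conj_lt {H : Subgroup G} {s g : G} (hle : H.map (MulAut.conj s).toMonoidHom ≤ H)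
    (hg : g ∈ H) (hg' : s⁻¹ * g * s ∉ H) : H.map (MulAut.conj s).toMonoidHom < H := by
  refine lt_of_le_of_ne hle fun heq => hg' ?_
  obtain ⟨h, hh, rfl⟩ := heq ▸ hg
  simpa [mul_assoc] using hh

theorem closure_coe_closure_union_inv (X : Set G) (u : G) :
    Subgroup.closure ((Subgroup.closure X : Set G) ∪ {u⁻¹}) = Subgroup.closure (insert u X) := by
  apply le_antisymm <;> rw [Subgroup.closure_le]
  · rintro g (hg | rfl)
    · exact Subgroup.closure_mono (Set.subset_insert u X) hg
    · exact inv_mem (Subgroup.subset_closure (Set.mem_insert u X))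
  · rintro g (rfl | hg)
    · simpa using inv_mem (Subgroup.subset_closure (Or.inr rfl) :
        g⁻¹ ∈ Subgroup.closure ((Subgroup.closure X : Set G) ∪ {g⁻¹}))
    · exact Subgroup.subset_closure (Or.inl (Subgroup.subset_closure hg))

end SubgroupConj

section TopHNN
open HNNExtension
variable {K : Type*} [Group K] {B : Subgroup K} {φ : (⊤ : Subgroup K) ≃* B}

/-- `g ↦ t g t⁻¹`, defined on all of `K` because the associated subgroup is `⊤`. -/
def topConj (φ : (⊤ : Subgroup K) ≃* B) (g : K) : K := φ ⟨g, Subgroup.mem_top g⟩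

theorem t_pow_mul_of (m : ℕ) (g : K) :
    (t : HNNExtension K ⊤ B φ) ^ m * of g = of ((topConj φ)^[m] g) * t ^ m := by
  induction m generalizing g with
  | zero => simp
  | succ m ih =>
    rw [pow_succ, mul_assoc, t_mul_of ⟨g, Subgroup.mem_top g⟩, ← mul_assoc, ih,
      Function.iterate_succ_apply, mul_assoc]
    rfl

theorem of_mul_inv_t_pow (m : ℕ) (g : K) :
    of g * ((t : HNNExtension K ⊤ B φ) ^ m)⁻¹ = (t ^ m)⁻¹ * of ((topConj φ)^[m] g) := by
  rw [eq_inv_mul_iff_mul_eq, ← mul_assoc, t_pow_mul_of, mul_inv_cancel_right]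

theorem exists_eq_inv_t_pow_mul_of_mul_t_pow (w : HNNExtension K ⊤ B φ) :
    ∃ (p q : ℕ) (g : K), w = (t ^ p)⁻¹ * of g * t ^ q := by
  induction w using HNNExtension.induction_on with
  | of g => exact ⟨0, 0, g, by simp⟩
  | t => exact ⟨0, 1, 1, by simp⟩
  | inv w hw =>
    obtain ⟨p, q, g, rfl⟩ := hw
    exact ⟨q, p, g⁻¹, by simp [mul_assoc]⟩
  | mul v w hv hw =>
    obtain ⟨p, q, g, rfl⟩ := hv
    obtain ⟨p', q', g', rfl⟩ := hw
    rcases le_total p' q with h | h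
    · obtain ⟨m, rfl⟩ := Nat.exists_eq_add_of_le h
      refine ⟨p, m + q', g * (topConj φ)^[m] g', ?_⟩
      calc (t ^ p)⁻¹ * of g * t ^ (p' + m) * ((t ^ p')⁻¹ * of g' * t ^ q')
          = (t ^ p)⁻¹ * of g * (t ^ m * of g') * t ^ q' := by rw [pow_add]; group
        _ = _ := by rw [t_pow_mul_of, map_mul, pow_add]; group
    · obtain ⟨m, rfl⟩ := Nat.exists_eq_add_of_le h
      refine ⟨m + p, q', (topConj φ)^[m] g * g', ?_⟩
      calc (t ^ p)⁻¹ * of g * t ^ q * ((t ^ (q + m))⁻¹ * of g' * t ^ q')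
          = (t ^ p)⁻¹ * (of g * (t ^ m)⁻¹) * of g' * t ^ q' := by rw [pow_add]; group
        _ = _ := by rw [of_mul_inv_t_pow, map_mul, pow_add]; group

end TopHNN

section AscendingHNN
open HNNExtension
variable {G : Type*} [Group G] (H : Subgroup G) (s : G) (hs : H.map (MulAut.conj s).toMonoidHom ≤ H)

def conjRestrict : H →* H :=
  ((MulAut.conj s).toMonoidHom.comp H.subtype).codRestrict H fun h => hs ⟨h, h.2, rfl⟩

theorem coe_conjRestrict_apply (h : H) : (conjRestrict H s hs h : G) = s * h * s⁻¹ := rfl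

theorem conjRestrict_injective : Function.Injective (conjRestrict H s hs) := fun a b hab =>
  Subtype.ext <| by simpa [coe_conjRestrict_apply] using congrArg Subtype.val hab

noncomputable def ascendingEquiv : (⊤ : Subgroup H) ≃* (conjRestrict H s hs).range :=
  Subgroup.topEquiv.trans (MonoidHom.ofInjective (conjRestrict_injective H s hs))

theorem coe_ascendingEquiv_apply (a : (⊤ : Subgroup H)) :
    ((ascendingEquiv H s hs a : H) : G) = s * ((a : H) : G) * s⁻¹ := by
  rw [ascendingEquiv, MulEquiv.trans_apply, MonoidHom.ofInjective_apply]
  rfl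

noncomputable def ascendingLift :
    HNNExtension H ⊤ (conjRestrict H s hs).range (ascendingEquiv H s hs) →* G :=
  lift H.subtype s fun a => by
    rw [Subgroup.subtype_apply, Subgroup.subtype_apply, coe_ascendingEquiv_apply,
      inv_mul_cancel_right]

@[simp] theorem ascendingLift_of (h : H) : ascendingLift H s hs (of h) = h := lift_of _ _ _ h

@[simp] theorem ascendingLift_t : ascendingLift H s hs t = s := lift_t _ _ _

theorem range_ascendingLift :
    (ascendingLift H s hs).range = Subgroup.closure ((H : Set G) ∪ {s}) := by
  apply le_antisymm
  · rintro _ ⟨w, rfl⟩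
    induction w using HNNExtension.induction_on with
    | of h => rw [ascendingLift_of]; exact Subgroup.subset_closure (Or.inl h.2)
    | t => rw [ascendingLift_t]; exact Subgroup.subset_closure (Or.inr rfl)
    | mul v w hv hw => rw [map_mul]; exact mul_mem hv hw
    | inv w hw => rw [map_inv]; exact inv_mem hw
  · rw [Subgroup.closure_le]
    rintro g (hg | hg)
    · exact ⟨of ⟨g, hg⟩, ascendingLift_of H s hs _⟩
    · exact ⟨t, (ascendingLift_t H s hs).trans hg.symm⟩

theorem ascendingLift_injective (hpow : ∀ k : ℤ, s ^ k ∈ H → k = 0) :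
    Function.Injective (ascendingLift H s hs) := by
  rw [injective_iff_map_eq_one]
  intro w hw
  obtain ⟨p, q, g, rfl⟩ := exists_eq_inv_t_pow_mul_of_mul_t_pow w
  simp only [map_mul, map_inv, map_pow, ascendingLift_t, ascendingLift_of] at hw
  have hg : (g : G) = s ^ ((p : ℤ) - q) := by
    calc (g : G) = s ^ p * ((s ^ p)⁻¹ * g * s ^ q) * (s ^ q)⁻¹ := by group
      _ = s ^ ((p : ℤ) - q) := by rw [hw]; group
  obtain rfl : p = q := by have := hpow _ (hg ▸ g.2); omega
  obtain rfl : g = 1 := Subtype.ext (by rw [hg, sub_self, zpow_zero]; rfl)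
  simp

end AscendingHNN

section Sequences
variable {n : ℕ}

@[simp] theorem cons_inj {a b : Fin n} {s t : C n} : cons a s = cons b t ↔ a = b ∧ s = t := by
  refine ⟨fun h => ⟨congrFun h 0, funext fun i => congrFun h (i + 1)⟩, ?_⟩
  rintro ⟨rfl, rfl⟩
  rfl

theorem cons_injective (a : Fin n) : Function.Injective (cons a) :=
  fun _ _ h => (cons_inj.mp h).2

theorem exists_eq_cons (ξ : C n) : ∃ a σ, ξ = cons a σ :=
  ⟨ξ 0, fun i => ξ (i + 1), funext fun i => by cases i <;> rfl⟩

theorem cons_const (a : Fin n) : cons a (fun _ => a) = fun _ => a :=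
  funext fun i => by cases i <;> rfl

theorem eq_const_of_eq_cons_cons {a : Fin n} {ξ : C n} (h : ξ = cons a (cons a ξ)) :
    ξ = fun _ => a := by
  have h2 : ∀ i, ξ i = a ∧ ξ (i + 1) = a := by
    intro i
    induction i with
    | zero => rw [h]; exact ⟨rfl, rfl⟩
    | succ i ih => exact ⟨ih.2, by rw [h]; exact ih.1⟩
  exact funext fun i => (h2 i).1

theorem eq_of_iterate_cons_eq {a : Fin n} {ξ ζ : C n} (hξ : ξ 0 ≠ a) (hζ : ζ 0 ≠ a) {i j : ℕ}
    (h : (cons a)^[i] ξ = (cons a)^[j] ζ) : i = j ∧ ξ = ζ := by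
  wlog hij : i ≤ j generalizing i j ξ ζ
  · obtain ⟨hji, hζξ⟩ := this hζ hξ h.symm (le_of_not_ge hij)
    exact ⟨hji.symm, hζξ.symm⟩
  obtain ⟨m, rfl⟩ := Nat.exists_eq_add_of_le hij
  rw [Function.iterate_add_apply] at h
  have hξm := (cons_injective a).iterate i h
  cases m with
  | zero => exact ⟨rfl, hξm⟩
  | succ m => exact absurd (by rw [hξm, Function.iterate_succ_apply']; rfl) hξ

@[simp] theorem wcons_nil (s : C n) : wcons [] s = s := rfl

@[simp] theorem wcons_cons (a : Fin n) (w : List (Fin n)) (s : C n) :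
    wcons (a :: w) s = cons a (wcons w s) := rfl

theorem ext_cons {f g : Γ n} (h : ∀ a σ, f (cons a σ) = g (cons a σ)) : f = g :=
  Homeomorph.ext fun ξ => by
    obtain ⟨a, σ, rfl⟩ := exists_eq_cons ξ
    exact h a σ

def FixesCone (a : Fin n) (w : Γ n) : Prop := ∀ η, w (cons a η) = cons a η

end Sequences

namespace IsPrefixMap
variable {n : ℕ} {α : List (Fin n)} {c c' f f' : Γ n}

theorem one : IsPrefixMap α 1 (1 : Γ n) := ⟨fun _ => rfl, fun _ _ => rfl⟩

theorem inv (h : IsPrefixMap α c f) : IsPrefixMap α c⁻¹ f⁻¹ :=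
  ⟨fun η => inv_apply_eq_of_apply_eq (by rw [h.1, apply_inv_apply]),
    fun ξ hξ => inv_apply_eq_of_apply_eq (h.2 ξ hξ)⟩

theorem mul (h : IsPrefixMap α c f) (h' : IsPrefixMap α c' f') :
    IsPrefixMap α (c * c') (f * f') :=
  ⟨fun η => by rw [mul_apply, h'.1, h.1, mul_apply],
    fun ξ hξ => by rw [mul_apply, h'.2 ξ hξ, h.2 ξ hξ]⟩

theorem pow (h : IsPrefixMap α c f) (d : ℕ) : IsPrefixMap α (c ^ d) (f ^ d) := by
  induction d with
  | zero => simpa only [pow_zero] using one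
  | succ d ih => simpa only [pow_succ] using ih.mul h

theorem conj {β : List (Fin n)} {g : Γ n} (hg : ∀ η, g (wcons β η) = wcons α η)
    (h : IsPrefixMap α c f) : IsPrefixMap β c (g⁻¹ * f * g) := by
  have hg' : ∀ η, g⁻¹ (wcons α η) = wcons β η := fun η => inv_apply_eq_of_apply_eq (hg η)
  refine ⟨fun η => by simp only [mul_apply, hg, h.1, hg'], fun ξ hξ => ?_⟩
  have hgξ : ∀ η, g ξ ≠ wcons α η := fun η heq =>
    hξ η (by rw [← hg' η, ← heq, inv_apply_apply])
  simp only [mul_apply, h.2 _ hgξ, inv_apply_apply]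

theorem apply_cons {a : Fin n} (h : IsPrefixMap [a] c f) (η : C n) :
    f (cons a η) = cons a (c η) :=
  h.1 η

theorem apply_cons_cons_cons {a a' a'' : Fin n} (h : IsPrefixMap [a, a', a''] c f) (η : C n) :
    f (cons a (cons a' (cons a'' η))) = cons a (cons a' (cons a'' (c η))) :=
  h.1 η

theorem apply_cons_of_ne {a b : Fin n} (h : IsPrefixMap (a :: α) c f) (hb : b ≠ a)
    (σ : C n) : f (cons b σ) = cons b σ :=
  h.2 _ fun _ heq => hb (cons_inj.mp heq).1

theorem apply_cons_cons_of_ne {a a' b : Fin n} (h : IsPrefixMap (a :: a' :: α) c f)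
    (hb : b ≠ a') (σ : C n) : f (cons a (cons b σ)) = cons a (cons b σ) :=
  h.2 _ fun _ heq => hb (cons_inj.mp (cons_inj.mp heq).2).1

theorem apply_cons_cons_cons_of_ne {a a' a'' b : Fin n}
    (h : IsPrefixMap (a :: a' :: a'' :: α) c f) (hb : b ≠ a'') (σ : C n) :
    f (cons a (cons a' (cons b σ))) = cons a (cons a' (cons b σ)) :=
  h.2 _ fun _ heq => hb (cons_inj.mp (cons_inj.mp (cons_inj.mp heq).2).2).1

theorem of_cons {a : Fin n} (h : ∀ η, f (cons a η) = cons a (c η))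
    (hfix : ∀ b, b ≠ a → FixesCone b f) : IsPrefixMap [a] c f := by
  refine ⟨h, fun ξ hξ => ?_⟩
  obtain ⟨b, σ, rfl⟩ := exists_eq_cons ξ
  exact hfix b (fun hba => hξ σ (by rw [hba]; rfl)) σ

theorem commute_of_fixesCone {a : Fin n} (h : IsPrefixMap [a] c f) {w : Γ n}
    (hw : FixesCone a w) : Commute f w := by
  refine ext_cons fun b σ => ?_
  show f (w (cons b σ)) = w (f (cons b σ))
  by_cases hb : b = a
  · subst hb
    rw [hw, h.apply_cons, hw]
  · obtain ⟨b', σ', hwb⟩ := exists_eq_cons (w (cons b σ))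
    have hb' : b' ≠ a := by
      rintro rfl
      exact hb (cons_inj.mp (w.injective (hwb.trans (hw σ').symm))).1
    rw [h.apply_cons_of_ne hb, hwb, h.apply_cons_of_ne hb']

end IsPrefixMap

section LocalShift
variable {n : ℕ}

/-- Homeomorphisms whose germ at `a^∞` is a prefix replacement `a^k ↦ a^l`. -/
def localShift (a : Fin n) : Subgroup (Γ n) where
  carrier := {g | ∃ k l : ℕ, ∀ η, g ((cons a)^[k] η) = (cons a)^[l] η}
  one_mem' := ⟨0, 0, fun _ => rfl⟩
  mul_mem' := by
    rintro f g ⟨kf, lf, hf⟩ ⟨kg, lg, hg⟩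
    refine ⟨kg + kf, lf + lg, fun η => ?_⟩
    rw [mul_apply, Function.iterate_add_apply, hg, ← Function.iterate_add_apply,
      Nat.add_comm lg kf, Function.iterate_add_apply, hf, ← Function.iterate_add_apply]
  inv_mem' := by
    rintro g ⟨k, l, h⟩
    exact ⟨l, k, fun η => inv_apply_eq_of_apply_eq (h η)⟩

theorem mem_localShift_of_fixesCone {a : Fin n} {g : Γ n} (h : FixesCone a g) :
    g ∈ localShift a :=
  ⟨1, 1, h⟩

end LocalShift

section Digits
variable {n : ℕ} (hn : 2 ≤ n)

-- Reducible, so that rewriting with the defining equations (written with `⟨0, _⟩` and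
-- `⟨n - 1, _⟩`) matches.
@[reducible] def minDigit : Fin n := ⟨0, by omega⟩

@[reducible] def maxDigit : Fin n := ⟨n - 1, by omega⟩

theorem minDigit_ne_maxDigit : minDigit hn ≠ maxDigit hn := by
  simp only [ne_eq, Fin.mk.injEq]; omega

variable {hn}

theorem one_le_of_ne_minDigit {k : Fin n} (hk : k ≠ minDigit hn) : 1 ≤ (k : ℕ) := by
  rw [ne_eq, Fin.ext_iff] at hk
  change ¬(k : ℕ) = 0 at hk
  omega

theorem le_sub_two_of_ne_maxDigit {k : Fin n} (hk : k ≠ maxDigit hn) : (k : ℕ) ≤ n - 2 := by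
  rw [ne_eq, Fin.ext_iff] at hk
  change ¬(k : ℕ) = n - 1 at hk
  have := k.isLt
  omega

end Digits

section Generators
variable {n : ℕ} {hn : 2 ≤ n} {x0 xl : Γ n}

namespace IsX0

theorem apply_min_cons (h : IsX0 n hn x0) {k : Fin n} (hk : k ≠ maxDigit hn) (η : C n) :
    x0 (cons (minDigit hn) (cons k η)) = cons k η :=
  h.1 k (le_sub_two_of_ne_maxDigit hk) η

theorem apply_min_max (h : IsX0 n hn x0) (η : C n) :
    x0 (cons (minDigit hn) (cons (maxDigit hn) η)) = cons (maxDigit hn) (cons (minDigit hn) η) :=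
  h.2.1 η

theorem apply_cons_of_ne_min (h : IsX0 n hn x0) {k : Fin n} (hk : k ≠ minDigit hn) (η : C n) :
    x0 (cons k η) = cons (maxDigit hn) (cons k η) := by
  by_cases hkL : k = maxDigit hn
  · subst hkL
    exact h.2.2.2 η
  · exact h.2.2.1 k (one_le_of_ne_minDigit hk) (le_sub_two_of_ne_maxDigit hkL) η

theorem inv_apply_cons_of_ne_max (h : IsX0 n hn x0) {k : Fin n} (hk : k ≠ maxDigit hn)
    (η : C n) : x0⁻¹ (cons k η) = cons (minDigit hn) (cons k η) :=
  inv_apply_eq_of_apply_eq (h.apply_min_cons hk η)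

theorem inv_apply_max_min (h : IsX0 n hn x0) (η : C n) :
    x0⁻¹ (cons (maxDigit hn) (cons (minDigit hn) η)) = cons (minDigit hn) (cons (maxDigit hn) η) :=
  inv_apply_eq_of_apply_eq (h.apply_min_max η)

theorem inv_apply_max_cons_of_ne_min (h : IsX0 n hn x0) {k : Fin n} (hk : k ≠ minDigit hn)
    (η : C n) : x0⁻¹ (cons (maxDigit hn) (cons k η)) = cons k η :=
  inv_apply_eq_of_apply_eq (h.apply_cons_of_ne_min hk η)

theorem mem_localShift (h : IsX0 n hn x0) : x0 ∈ localShift (minDigit hn) :=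
  ⟨2, 1, h.apply_min_cons (minDigit_ne_maxDigit hn)⟩

end IsX0

theorem IsXLast.inv_apply_cons_of_ne_max (h : IsXLast n hn x0 xl) {k : Fin n}
    (hk : k ≠ maxDigit hn) (η : C n) : xl⁻¹ (cons k η) = cons k η :=
  inv_apply_eq_of_apply_eq (h.1 k (le_sub_two_of_ne_maxDigit hk) η)

theorem IsXLast.inv_apply_max (h : IsXLast n hn x0 xl) (η : C n) :
    xl⁻¹ (cons (maxDigit hn) η) = cons (maxDigit hn) (x0⁻¹ η) :=
  inv_apply_eq_of_apply_eq (by rw [h.2, apply_inv_apply])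

theorem IsXFamily.fixesCone_min {x : Fin n → Γ n} (h : IsXFamily n hn x) {j : Fin n}
    (hj : j ≠ minDigit hn) : FixesCone (minDigit hn) (x j) := by
  by_cases hjL : j = maxDigit hn
  · subst hjL
    exact h.2.2.1 (minDigit hn) (Nat.zero_le _)
  · exact (h.2.1 j (one_le_of_ne_minDigit hj) (le_sub_two_of_ne_maxDigit hjL)).1 (minDigit hn)
      (one_le_of_ne_minDigit hj)

/-- The paper's `x_{0@0}`. -/
theorem isPrefixMap_x0_cone (h0 : IsX0 n hn x0) (hl : IsXLast n hn x0 xl) :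
    IsPrefixMap [minDigit hn] x0 (x0⁻¹ * xl⁻¹ * x0 * x0) := by
  have hmn := minDigit_ne_maxDigit hn
  refine IsPrefixMap.of_cons (fun η => ?_) (fun a ha σ => ?_)
  · obtain ⟨b, τ, rfl⟩ := exists_eq_cons η
    show x0⁻¹ (xl⁻¹ (x0 (x0 (cons (minDigit hn) (cons b τ))))) =
      cons (minDigit hn) (x0 (cons b τ))
    by_cases hbL : b = maxDigit hn
    · subst hbL
      rw [h0.apply_min_max, h0.apply_cons_of_ne_min hmn.symm, hl.inv_apply_max,
        h0.inv_apply_max_min, h0.inv_apply_max_min, h0.apply_cons_of_ne_min hmn.symm]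
    rw [h0.apply_min_cons hbL]
    by_cases hb0 : b = minDigit hn
    · subst hb0
      obtain ⟨c, ρ, rfl⟩ := exists_eq_cons τ
      by_cases hcL : c = maxDigit hn
      · subst hcL
        rw [h0.apply_min_max, hl.inv_apply_max, h0.inv_apply_cons_of_ne_max hmn,
          h0.inv_apply_max_min]
      · rw [h0.apply_min_cons hcL, hl.inv_apply_cons_of_ne_max hcL,
          h0.inv_apply_cons_of_ne_max hcL]
    · rw [h0.apply_cons_of_ne_min hb0, hl.inv_apply_max, h0.inv_apply_cons_of_ne_max hbL,
        h0.inv_apply_max_min]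
  · show x0⁻¹ (xl⁻¹ (x0 (x0 (cons a σ)))) = cons a σ
    rw [h0.apply_cons_of_ne_min ha, h0.apply_cons_of_ne_min hmn.symm, hl.inv_apply_max,
      h0.inv_apply_max_cons_of_ne_min ha, h0.inv_apply_max_cons_of_ne_min ha]

end Generators

namespace IsY
variable {n : ℕ} {hn : 2 ≤ n} {y : Γ n}

theorem apply_min_min (h : IsY n hn y) (ζ : C n) :
    y (cons (minDigit hn) (cons (minDigit hn) ζ)) = cons (minDigit hn) (y ζ) :=
  h.1 ζ

theorem apply_min_cons (h : IsY n hn y) {k : Fin n} (hk0 : k ≠ minDigit hn)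
    (hkL : k ≠ maxDigit hn) (ζ : C n) : y (cons (minDigit hn) (cons k ζ)) = cons k ζ :=
  h.2.1 k (one_le_of_ne_minDigit hk0) (le_sub_two_of_ne_maxDigit hkL) ζ

theorem apply_cons (h : IsY n hn y) {k : Fin n} (hk0 : k ≠ minDigit hn)
    (hkL : k ≠ maxDigit hn) (ζ : C n) : y (cons k ζ) = cons (maxDigit hn) (cons k ζ) :=
  h.2.2.1 k (one_le_of_ne_minDigit hk0) (le_sub_two_of_ne_maxDigit hkL) ζ

theorem apply_min_max (h : IsY n hn y) (ζ : C n) :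
    y (cons (minDigit hn) (cons (maxDigit hn) ζ)) =
      cons (maxDigit hn) (cons (minDigit hn) (y⁻¹ ζ)) :=
  h.2.2.2.1 ζ

theorem apply_max (h : IsY n hn y) (ζ : C n) :
    y (cons (maxDigit hn) ζ) = cons (maxDigit hn) (cons (maxDigit hn) (y ζ)) :=
  h.2.2.2.2 ζ

theorem apply_const_max (h : IsY n hn y) : y (fun _ => maxDigit hn) = fun _ => maxDigit hn := by
  apply eq_const_of_eq_cons_cons
  conv_lhs => rw [← cons_const]
  exact h.apply_max _

theorem apply_iterate_even (h : IsY n hn y) (j : ℕ) :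
    y ((cons (minDigit hn))^[2 * j] fun _ => maxDigit hn) =
      (cons (minDigit hn))^[j] fun _ => maxDigit hn := by
  induction j with
  | zero => exact h.apply_const_max
  | succ j ih =>
    rw [Nat.mul_succ, Function.iterate_succ_apply', Function.iterate_succ_apply', h.apply_min_min,
      ih, Function.iterate_succ_apply']

theorem apply_iterate_odd (h : IsY n hn y) (j : ℕ) :
    y ((cons (minDigit hn))^[2 * j + 1] fun _ => maxDigit hn) =
      (cons (minDigit hn))^[j]
        (cons (maxDigit hn) (cons (minDigit hn) fun _ => maxDigit hn)) := by
  induction j with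
  | zero =>
    conv_lhs => rw [Function.iterate_one, ← cons_const]
    rw [h.apply_min_max, inv_apply_eq_of_apply_eq h.apply_const_max]
    rfl
  | succ j ih =>
    rw [show 2 * (j + 1) + 1 = 2 * j + 1 + 1 + 1 by ring, Function.iterate_succ_apply',
      Function.iterate_succ_apply', h.apply_min_min, ih, Function.iterate_succ_apply']

theorem pow_apply_iterate (h : IsY n hn y) (d j : ℕ) :
    (y ^ d) ((cons (minDigit hn))^[2 ^ d * j] fun _ => maxDigit hn) =
      (cons (minDigit hn))^[j] fun _ => maxDigit hn := by
  induction d generalizing j with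
  | zero => simp
  | succ d ih => rw [pow_succ, pow_succ', mul_assoc, mul_apply, h.apply_iterate_even, ih]

end IsY

section ConjugationOfX0
variable {n : ℕ} {hn : 2 ≤ n} {x0 y y0 g0 Y1 Y2 : Γ n}

theorem y0_inv_mul_x0_mul_y0 (h0 : IsX0 n hn x0) (hy : IsY n hn y)
    (hy0 : IsPrefixMap [minDigit hn] y y0) (hg0 : IsPrefixMap [minDigit hn] x0 g0)
    (hY1 : IsPrefixMap [maxDigit hn, minDigit hn, minDigit hn] y Y1)
    (hY2 : IsPrefixMap [maxDigit hn, minDigit hn, maxDigit hn] y Y2) :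
    y0⁻¹ * x0 * y0 = Y2 * Y1⁻¹ * x0 * g0 := by
  have hmn := minDigit_ne_maxDigit hn
  have hy0i := hy0.inv
  have hY1i := hY1.inv
  refine ext_cons fun a σ => ?_
  show y0⁻¹ (x0 (y0 (cons a σ))) = Y2 (Y1⁻¹ (x0 (g0 (cons a σ))))
  rcases ne_or_eq a (minDigit hn) with ha | rfl
  · rw [hy0.apply_cons_of_ne ha, h0.apply_cons_of_ne_min ha, hy0i.apply_cons_of_ne hmn.symm,
      hg0.apply_cons_of_ne ha, h0.apply_cons_of_ne_min ha, hY1i.apply_cons_cons_of_ne ha,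
      hY2.apply_cons_cons_of_ne ha]
  obtain ⟨b, τ, rfl⟩ := exists_eq_cons σ
  rw [hy0.apply_cons, hg0.apply_cons]
  rcases ne_or_eq b (minDigit hn) with hb0 | rfl
  · by_cases hbL : b = maxDigit hn
    · subst hbL
      rw [hy.apply_max, h0.apply_min_max, hy0i.apply_cons_of_ne hb0,
        h0.apply_cons_of_ne_min hb0, h0.apply_min_max,
        hY1i.apply_cons_cons_cons_of_ne hb0, hY2.apply_cons_cons_cons]
    · rw [hy.apply_cons hb0 hbL, h0.apply_min_max, hy0i.apply_cons_of_ne hmn.symm,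
        h0.apply_cons_of_ne_min hb0, h0.apply_min_max, hY1i.apply_cons_cons_cons_of_ne hb0,
        hY2.apply_cons_cons_cons_of_ne hbL]
  obtain ⟨c, ρ, rfl⟩ := exists_eq_cons τ
  rcases ne_or_eq c (minDigit hn) with hc0 | rfl
  · by_cases hcL : c = maxDigit hn
    · subst hcL
      rw [hy.apply_min_max, h0.apply_min_max, hy0i.apply_cons_of_ne hc0, h0.apply_min_max,
        h0.apply_min_max, hY1i.apply_cons_cons_cons, hY2.apply_cons_cons_cons_of_ne hmn]
    · rw [hy.apply_min_cons hc0 hcL, h0.apply_min_cons hcL, hy0i.apply_cons_of_ne hc0,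
        h0.apply_min_cons hcL, hY1i.apply_cons_of_ne hcL, hY2.apply_cons_of_ne hcL]
  rw [hy.apply_min_min, h0.apply_min_cons hmn, hy0i.apply_cons, inv_apply_apply,
    h0.apply_min_cons hmn, h0.apply_min_cons hmn, hY1i.apply_cons_of_ne hmn,
    hY2.apply_cons_of_ne hmn]

end ConjugationOfX0

section GeneratorsOfGy
variable {n : ℕ} {hn : 2 ≤ n} {x : Fin n → Γ n} {x0 xl y y0 y10 y1 : Γ n}

theorem y0_inv_mul_x0_mul_y0_mem {K : Subgroup (Γ n)} (h0 : IsX0 n hn x0)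
    (hl : IsXLast n hn x0 xl) (hy : IsY n hn y) (hy0 : IsPrefixMap [minDigit hn] y y0)
    (hy10 : IsPrefixMap [maxDigit hn, minDigit hn] y y10) (hx0K : x0 ∈ K) (hxlK : xl ∈ K)
    (hy10K : y10 ∈ K) : y0⁻¹ * x0 * y0 ∈ K := by
  have hmn := minDigit_ne_maxDigit hn
  obtain ⟨g0, hg0K, hg0⟩ : ∃ g ∈ K, IsPrefixMap [minDigit hn] x0 g :=
    ⟨_, mul_mem (mul_mem (mul_mem (inv_mem hx0K) (inv_mem hxlK)) hx0K) hx0K,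
      isPrefixMap_x0_cone h0 hl⟩
  obtain ⟨Y1, hY1K, hY1⟩ : ∃ Y ∈ K, IsPrefixMap [maxDigit hn, minDigit hn, minDigit hn] y Y :=
    ⟨_, mul_mem (mul_mem (inv_mem hxlK) hy10K) hxlK, hy10.conj fun η => by
      simp only [wcons_cons, wcons_nil]
      rw [hl.2, h0.apply_min_cons hmn]⟩
  obtain ⟨Y2, hY2K, hY2⟩ : ∃ Y ∈ K, IsPrefixMap [maxDigit hn, minDigit hn, maxDigit hn] y Y := by
    have hFK : x0 * g0⁻¹ * x0⁻¹ ∈ K := mul_mem (mul_mem hx0K (inv_mem hg0K)) (inv_mem hx0K)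
    refine ⟨_, mul_mem (mul_mem (inv_mem hFK) hy10K) hFK, hy10.conj fun η => ?_⟩
    simp only [wcons_cons, wcons_nil, mul_apply]
    rw [h0.inv_apply_max_min, hg0.inv.apply_cons, h0.inv_apply_max_cons_of_ne_min hmn.symm,
      h0.apply_min_max]
  rw [y0_inv_mul_x0_mul_y0 h0 hy hy0 hg0 hY1 hY2]
  exact mul_mem (mul_mem (mul_mem hY2K (inv_mem hY1K)) hx0K) hg0K

theorem closure_le_localShift (hx : IsXFamily n hn x)
    (hy10 : IsPrefixMap [maxDigit hn, minDigit hn] y y10)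
    (hy1 : IsPrefixMap [maxDigit hn] y y1) :
    Subgroup.closure (Set.range x ∪ {y10, y1}) ≤ localShift (minDigit hn) := by
  have hmn := minDigit_ne_maxDigit hn
  rw [Subgroup.closure_le]
  rintro _ (⟨j, rfl⟩ | rfl | rfl)
  · by_cases hj : j = minDigit hn
    · subst hj
      exact hx.1.mem_localShift
    · exact mem_localShift_of_fixesCone (hx.fixesCone_min hj)
  · exact mem_localShift_of_fixesCone (hy10.apply_cons_of_ne hmn)
  · exact mem_localShift_of_fixesCone (hy1.apply_cons_of_ne hmn)

theorem conj_generator_mem (hx : IsXFamily n hn x) (hy : IsY n hn y)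
    (hy10 : IsPrefixMap [maxDigit hn, minDigit hn] y y10)
    (hy0 : IsPrefixMap [minDigit hn] y y0) (hy1 : IsPrefixMap [maxDigit hn] y y1) :
    ∀ g ∈ Set.range x ∪ {y10, y1},
      y0⁻¹ * g * y0⁻¹⁻¹ ∈ Subgroup.closure (Set.range x ∪ {y10, y1}) := by
  have hmn := minDigit_ne_maxDigit hn
  have hmem : ∀ g ∈ Set.range x ∪ {y10, y1}, g ∈ Subgroup.closure (Set.range x ∪ {y10, y1}) :=
    fun g hg => Subgroup.subset_closure hg
  intro g hg
  rw [inv_inv]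
  have hfix : FixesCone (minDigit hn) g → y0⁻¹ * g * y0 ∈ Subgroup.closure _ := fun hw => by
    rw [(hy0.commute_of_fixesCone hw).inv_mul_cancel]
    exact hmem g hg
  rcases hg with ⟨j, rfl⟩ | rfl | rfl
  · by_cases hj : j = minDigit hn
    · subst hj
      exact y0_inv_mul_x0_mul_y0_mem hx.1 hx.2.2 hy hy0 hy10 (hmem _ (Or.inl ⟨_, rfl⟩))
        (hmem _ (Or.inl ⟨_, rfl⟩)) (hmem _ (Or.inr (Or.inl rfl)))
    · exact hfix (hx.fixesCone_min hj)
  · exact hfix (hy10.apply_cons_of_ne hmn)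
  · exact hfix (hy1.apply_cons_of_ne hmn)

theorem eq_zero_of_y0_pow_mem_localShift (hy : IsY n hn y)
    (hy0 : IsPrefixMap [minDigit hn] y y0) {d : ℕ} (hd : y0 ^ d ∈ localShift (minDigit hn)) : d = 0 := by
  obtain ⟨k, l, h⟩ := hd
  have hν := (minDigit_ne_maxDigit hn).symm
  have hP : 1 ≤ 2 ^ d := Nat.one_le_two_pow
  -- `y₀^d` maps `0^(2^d j + 1) (n-1)^∞` to `0^(j+1) (n-1)^∞`, incompatible with a shift.
  have key : ∀ j, k ≤ j → j + 1 = l + (2 ^ d * j + 1 - k) := by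
    intro j hj
    have hkj : k ≤ 2 ^ d * j + 1 := by nlinarith
    refine (eq_of_iterate_cons_eq (ξ := fun _ => maxDigit hn) (ζ := fun _ => maxDigit hn)
      hν hν ?_).1
    calc (cons (minDigit hn))^[j + 1] (fun _ => maxDigit hn)
        = (y0 ^ d) ((cons (minDigit hn))^[2 ^ d * j + 1] fun _ => maxDigit hn) := by
          rw [Function.iterate_succ_apply', Function.iterate_succ_apply', (hy0.pow d).apply_cons,
            hy.pow_apply_iterate]
      _ = (y0 ^ d) ((cons (minDigit hn))^[k]
            ((cons (minDigit hn))^[2 ^ d * j + 1 - k] fun _ => maxDigit hn)) := by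
          rw [← Function.iterate_add_apply, Nat.add_sub_cancel' hkj]
      _ = _ := by rw [h, ← Function.iterate_add_apply]
  have h1 := key k le_rfl
  have h2 := key (k + 1) (Nat.le_succ k)
  have hk : k ≤ 2 ^ d * k := Nat.le_mul_of_pos_left k hP
  rw [Nat.mul_succ] at h2
  by_contra hd
  have := Nat.one_lt_two_pow hd
  generalize 2 ^ d * k = M at h1 h2 hk
  omega

theorem y0_mul_x0_mul_y0_inv_not_mem_localShift (h0 : IsX0 n hn x0) (hy : IsY n hn y)
    (hy0 : IsPrefixMap [minDigit hn] y y0) : y0 * x0 * y0⁻¹ ∉ localShift (minDigit hn) := by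
  rintro ⟨k, l, h⟩
  have hmn := minDigit_ne_maxDigit hn
  have hcomp : (y0 * x0 * y0⁻¹) ((cons (minDigit hn))^[k + 2] fun _ => maxDigit hn) =
      (cons (minDigit hn))^[k + 1]
        (cons (maxDigit hn) (cons (minDigit hn) fun _ => maxDigit hn)) := by
    rw [mul_apply, mul_apply, Function.iterate_succ_apply', hy0.inv.apply_cons,
      inv_apply_eq_of_apply_eq (hy.apply_iterate_even (k + 1)),
      show 2 * (k + 1) = 2 * k + 1 + 1 by ring, Function.iterate_succ_apply',
      h0.apply_min_cons hmn, hy0.apply_cons, hy.apply_iterate_odd,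
      Function.iterate_succ_apply']
  have hshift : (y0 * x0 * y0⁻¹) ((cons (minDigit hn))^[k + 2] fun _ => maxDigit hn) =
      (cons (minDigit hn))^[l + 2] fun _ => maxDigit hn := by
    rw [Function.iterate_add_apply, h, ← Function.iterate_add_apply]
  have := (eq_of_iterate_cons_eq (ζ := fun _ => maxDigit hn) hmn.symm hmn.symm
    (hcomp.symm.trans hshift)).2
  exact hmn (congrFun this 1)

end GeneratorsOfGy

theorem yGy_HNN_over_Gy
    (n : ℕ) (hn : 2 ≤ n) (x : Fin n → Γ n) (hx : IsXFamily n hn x)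
    (ycore : Γ n) (hy : IsY n hn ycore)
    (y10 : Γ n) (hy10 : IsPrefixMap [⟨n - 1, by omega⟩, ⟨0, by omega⟩] ycore y10)
    (y0 : Γ n) (hy0 : IsPrefixMap [⟨0, by omega⟩] ycore y0)
    (y1 : Γ n) (hy1 : IsPrefixMap [⟨n - 1, by omega⟩] ycore y1)
    (Gy : Subgroup (Γ n)) (hGy : Gy = Subgroup.closure (Set.range x ∪ {y10, y1}))
    (yGy : Subgroup (Γ n)) (hyGy : yGy = Subgroup.closure (Set.range x ∪ {y10, y0, y1})) :
    Subgroup.closure ((Gy : Set (Γ n)) ∪ {y0⁻¹}) = yGy ∧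
    Gy.map (MulAut.conj (y0⁻¹)).toMonoidHom < Gy ∧
    ∃ (B : Subgroup ↥Gy) (φ : (⊤ : Subgroup ↥Gy) ≃* B),
      (∀ a : (⊤ : Subgroup ↥Gy),
        ((φ a : ↥Gy) : Γ n) = y0⁻¹ * ((a : ↥Gy) : Γ n) * (y0⁻¹)⁻¹) ∧
      ∃ f : HNNExtension ↥Gy ⊤ B φ →* Γ n,
        (∀ h : ↥Gy, f (HNNExtension.of h) = (h : Γ n)) ∧
        f HNNExtension.t = y0⁻¹ ∧
        Function.Injective f ∧ f.range = yGy := by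
  subst hGy hyGy
  have hx0 : x ⟨0, by omega⟩ ∈ Subgroup.closure (Set.range x ∪ {y10, y1}) :=
    Subgroup.subset_closure (Or.inl ⟨_, rfl⟩)
  have hGyS := closure_le_localShift hx hy10 hy1
  have hle := map_conj_closure_le (conj_generator_mem hx hy hy10 hy0 hy1)
  have hgen : Subgroup.closure ((Subgroup.closure (Set.range x ∪ {y10, y1}) : Set (Γ n)) ∪ {y0⁻¹})
      = Subgroup.closure (Set.range x ∪ {y10, y0, y1}) := by
    rw [closure_coe_closure_union_inv]
    congr 1
    ext
    simp only [Set.mem_insert_iff, Set.mem_union, Set.mem_singleton_iff]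
    tauto
  have hpow : ∀ k : ℤ, y0⁻¹ ^ k ∈ Subgroup.closure (Set.range x ∪ {y10, y1}) → k = 0 := by
    intro k hk
    obtain ⟨d, rfl | rfl⟩ := Int.eq_nat_or_neg k <;>
      simp only [zpow_neg, zpow_natCast, inv_pow, inv_mem_iff] at hk <;>
      simp [eq_zero_of_y0_pow_mem_localShift hy hy0 (hGyS hk)]
  refine ⟨hgen, map_conj_lt hle hx0 ?_, _, ascendingEquiv _ _ hle, coe_ascendingEquiv_apply _ _ hle,
    ascendingLift _ _ hle, ascendingLift_of _ _ hle, ascendingLift_t _ _ hle,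
    ascendingLift_injective _ _ hle hpow, (range_ascendingLift _ _ hle).trans hgen⟩
  rw [inv_inv]
  exact fun h => y0_mul_x0_mul_y0_inv_not_mem_localShift hx.1 hy hy0 (hGyS h)

end LM
end
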